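/- arXiv:2601.14416 — 7 statements merged into one kernel-verified Lean document; each statement's English description precedes it below -/
import Mathlib

section
/- Let T > 0, let n₁, …, n_d be pairwise distinct positive integers, set ω_i := 2π n_i / T, and let a₁, …, a_d be nonzero reals. Let H ∈ ℝ^{d×d} be symmetric, θ* ∈ ℝ^d, Q* ∈ ℝ, and define the quadratic map Q(θ) := Q* + (1/2)(θ − θ*)ᵀ H (θ − θ*). Then for every fixed θ̃ ∈ ℝ^d and every component i, (1/T)·∫₀^T (2/a_i)·sin(ω_i t)·Q(θ* + θ̃ + S(t)) dt = (H θ̃)_i, where S(t) ∈ ℝ^d has components S_k(t) = a_k sin(ω_k t). In other words, the period-average of the demodulated output M(t)·Q(θ* + θ̃ + S(t)) equals the true gradient H θ̃. -/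
open Real Matrix intervalIntegral

private lemma int_sin_m (T : ℝ) (hT : 0 < T) (m : ℤ) :
    ∫ t in (0:ℝ)..T, sin (2 * π * m / T * t) = 0 := by
  rcases eq_or_ne m 0 with hm | hm
  · simp [hm]
  have hc : (2 * π * m / T) ≠ 0 := by
    have := Real.pi_ne_zero
    exact div_ne_zero (mul_ne_zero (mul_ne_zero two_ne_zero this) (Int.cast_ne_zero.mpr hm)) hT.ne'
  have := intervalIntegral.integral_comp_mul_left (a := (0:ℝ)) (b := T) (fun x => sin x) hc
  simp only [integral_sin] at this
  rw [this]
  have hcT : (2 * π * m / T) * T = m * (2 * π) := by field_simp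
  rw [hcT, Real.cos_int_mul_two_pi, mul_zero]
  simp

private lemma int_cos_m (T : ℝ) (hT : 0 < T) (m : ℤ) :
    ∫ t in (0:ℝ)..T, cos (2 * π * m / T * t) = if m = 0 then T else 0 := by
  rcases eq_or_ne m 0 with hm | hm
  · simp [hm]
  have hc : (2 * π * m / T) ≠ 0 := by
    have := Real.pi_ne_zero
    exact div_ne_zero (mul_ne_zero (mul_ne_zero two_ne_zero this) (Int.cast_ne_zero.mpr hm)) hT.ne'
  have := intervalIntegral.integral_comp_mul_left (a := (0:ℝ)) (b := T) (fun x => cos x) hc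
  simp only [integral_cos] at this
  rw [this]
  have hcT : (2 * π * m / T) * T = m * (2 * π) := by field_simp
  rw [hcT]
  have : Real.sin ((m:ℝ) * (2 * π)) = 0 := by
    have : ((m:ℝ)) * (2 * π) = (2*m : ℤ) * π := by push_cast; ring
    rw [this, Real.sin_int_mul_pi]
  simp [this, hm]

private lemma ii_sin (T c : ℝ) :
    IntervalIntegrable (fun t => sin (c * t)) MeasureTheory.volume 0 T :=
  (Real.continuous_sin.comp (continuous_const.mul continuous_id)).intervalIntegrable _ _

private lemma ii_cos (T c : ℝ) :
    IntervalIntegrable (fun t => cos (c * t)) MeasureTheory.volume 0 T :=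
  (Real.continuous_cos.comp (continuous_const.mul continuous_id)).intervalIntegrable _ _

private lemma int_cos_sin (T : ℝ) (hT : 0 < T) (m n : ℤ) :
    ∫ t in (0:ℝ)..T, cos (2 * π * m / T * t) * sin (2 * π * n / T * t) = 0 := by
  have key : ∀ t : ℝ, cos (2 * π * m / T * t) * sin (2 * π * n / T * t)
      = (1/2) * sin (2 * π * ((m+n : ℤ) : ℝ) / T * t)
        - (1/2) * sin (2 * π * ((m-n : ℤ) : ℝ) / T * t) := by
    intro t
    have h1 : 2 * π * ((m+n : ℤ) : ℝ) / T * t = 2*π*m/T*t + 2*π*n/T*t := by push_cast; ring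
    have h2 : 2 * π * ((m-n : ℤ) : ℝ) / T * t = 2*π*m/T*t - 2*π*n/T*t := by push_cast; ring
    rw [h1, h2, sin_add, sin_sub]; ring
  rw [intervalIntegral.integral_congr (g := fun t => (1/2) * sin (2 * π * ((m+n : ℤ) : ℝ) / T * t)
        - (1/2) * sin (2 * π * ((m-n : ℤ) : ℝ) / T * t)) (fun t _ => key t)]
  rw [intervalIntegral.integral_sub ((ii_sin T _).const_mul _) ((ii_sin T _).const_mul _),
    intervalIntegral.integral_const_mul, intervalIntegral.integral_const_mul,
    int_sin_m T hT, int_sin_m T hT]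
  ring

private lemma int_sin_sin (T : ℝ) (hT : 0 < T) (m n : ℤ) (h : m + n ≠ 0) :
    ∫ t in (0:ℝ)..T, sin (2 * π * m / T * t) * sin (2 * π * n / T * t)
      = if m = n then T / 2 else 0 := by
  have key : ∀ t : ℝ, sin (2 * π * m / T * t) * sin (2 * π * n / T * t)
      = (1/2) * cos (2 * π * ((m-n : ℤ) : ℝ) / T * t)
        - (1/2) * cos (2 * π * ((m+n : ℤ) : ℝ) / T * t) := by
    intro t
    have h1 : 2 * π * ((m+n : ℤ) : ℝ) / T * t = 2*π*m/T*t + 2*π*n/T*t := by push_cast; ring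
    have h2 : 2 * π * ((m-n : ℤ) : ℝ) / T * t = 2*π*m/T*t - 2*π*n/T*t := by push_cast; ring
    rw [h1, h2, cos_add, cos_sub]; ring
  rw [intervalIntegral.integral_congr (g := fun t => (1/2) * cos (2 * π * ((m-n : ℤ) : ℝ) / T * t)
        - (1/2) * cos (2 * π * ((m+n : ℤ) : ℝ) / T * t)) (fun t _ => key t)]
  rw [intervalIntegral.integral_sub ((ii_cos T _).const_mul _) ((ii_cos T _).const_mul _),
    intervalIntegral.integral_const_mul, intervalIntegral.integral_const_mul,
    int_cos_m T hT, int_cos_m T hT]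
  simp only [h, if_false, sub_eq_iff_eq_add]
  rcases eq_or_ne m n with he | he
  · simp [he]; ring
  · have : m - n ≠ 0 := sub_ne_zero.mpr he
    simp [he, this]

private lemma int_sin3 (T : ℝ) (hT : 0 < T) (m n p : ℤ) :
    ∫ t in (0:ℝ)..T, sin (2 * π * m / T * t) * sin (2 * π * n / T * t)
        * sin (2 * π * p / T * t) = 0 := by
  have key : ∀ t : ℝ, sin (2 * π * m / T * t) * sin (2 * π * n / T * t)
        * sin (2 * π * p / T * t)
      = (1/2) * (cos (2 * π * ((m-n : ℤ) : ℝ) / T * t) * sin (2 * π * p / T * t))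
        - (1/2) * (cos (2 * π * ((m+n : ℤ) : ℝ) / T * t) * sin (2 * π * p / T * t)) := by
    intro t
    have h1 : 2 * π * ((m+n : ℤ) : ℝ) / T * t = 2*π*m/T*t + 2*π*n/T*t := by push_cast; ring
    have h2 : 2 * π * ((m-n : ℤ) : ℝ) / T * t = 2*π*m/T*t - 2*π*n/T*t := by push_cast; ring
    rw [h1, h2, cos_add, cos_sub]; ring
  rw [intervalIntegral.integral_congr (g := fun t =>
        (1/2) * (cos (2 * π * ((m-n : ℤ) : ℝ) / T * t) * sin (2 * π * p / T * t))
        - (1/2) * (cos (2 * π * ((m+n : ℤ) : ℝ) / T * t) * sin (2 * π * p / T * t)))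
      (fun t _ => key t)]
  have icc : ∀ c c' : ℝ, IntervalIntegrable (fun t => (1/2) * (cos (c*t) * sin (c'*t)))
      MeasureTheory.volume 0 T := fun c c' =>
    (continuous_const.mul ((Real.continuous_cos.comp (continuous_const.mul continuous_id)).mul
      (Real.continuous_sin.comp (continuous_const.mul continuous_id)))).intervalIntegrable _ _
  rw [intervalIntegral.integral_sub (icc _ _) (icc _ _),
    intervalIntegral.integral_const_mul, intervalIntegral.integral_const_mul,
    int_cos_sin T hT, int_cos_sin T hT]
  ring

set_option maxHeartbeats 1000000 in
/-- Averaging the demodulated output of the quadratic map recovers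
the exact gradient: with distinct positive integer frequency multipliers,
`ω_i = 2π n_i / T`, nonzero amplitudes, symmetric Hessian `H`, optimizer `θ*` and
extremum value `Q*`, for any frozen estimation error `θ̃` and any component `i`,
`(1/T)·∫₀^T (2/a_i) sin(ω_i t) · Q(θ* + θ̃ + S(t)) dt = (H θ̃)_i`. -/
theorem demodulated_average_is_gradient
    (T : ℝ) (hT : 0 < T) (d : ℕ) (nn : Fin d → ℕ)
    (hpos : ∀ i, 0 < nn i) (hinj : Function.Injective nn)
    (a : Fin d → ℝ) (ha : ∀ i, a i ≠ 0)
    (H : Matrix (Fin d) (Fin d) ℝ) (hH : H.IsSymm)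
    (θs : Fin d → ℝ) (Qs : ℝ)
    (Qmap : (Fin d → ℝ) → ℝ)
    (hQmap : ∀ θ, Qmap θ = Qs + (1/2) * ((θ - θs) ⬝ᵥ H.mulVec (θ - θs)))
    (θtil : Fin d → ℝ) (i : Fin d) :
    (1 / T) * ∫ t in (0:ℝ)..T,
        (2 / a i) * Real.sin ((2 * π * nn i / T) * t) *
          Qmap (θs + θtil + fun k => a k * Real.sin ((2 * π * nn k / T) * t)) =
      H.mulVec θtil i := by
  -- nat-cast versions of the integral lemmas
  have J1 : ∀ m : ℕ, ∫ t in (0:ℝ)..T, sin (2 * π * m / T * t) = 0 := by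
    intro m
    have := int_sin_m T hT (m : ℤ)
    push_cast at this ⊢
    exact this
  have J2 : ∀ m n : Fin d, (∫ t in (0:ℝ)..T,
      sin (2 * π * nn m / T * t) * sin (2 * π * nn n / T * t)) = if m = n then T / 2 else 0 := by
    intro m n
    have hne : (nn m : ℤ) + (nn n : ℤ) ≠ 0 := by
      have := hpos m; positivity
    have := int_sin_sin T hT (nn m) (nn n) hne
    simp only [Int.natCast_inj, Nat.cast_inj] at this
    rw [show ((if nn m = nn n then T / 2 else 0) : ℝ) = if m = n then T / 2 else 0 by
      simp [hinj.eq_iff]] at this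
    push_cast at this ⊢
    exact this
  have J3 : ∀ m n p : ℕ, (∫ t in (0:ℝ)..T,
      sin (2 * π * m / T * t) * sin (2 * π * n / T * t) * sin (2 * π * p / T * t)) = 0 := by
    intro m n p
    have := int_sin3 T hT m n p
    push_cast at this ⊢
    exact this
  -- the expanded summand
  set F : Fin d → Fin d → ℝ → ℝ := fun j k t => (1 / a i * H j k) *
          ((θtil j * θtil k) * Real.sin ((2 * π * nn i / T) * t)
           + (θtil j * a k) * (Real.sin ((2 * π * nn i / T) * t) * Real.sin ((2 * π * nn k / T) * t))
           + (a j * θtil k) * (Real.sin ((2 * π * nn i / T) * t) * Real.sin ((2 * π * nn j / T) * t))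
           + (a j * a k) * (Real.sin ((2 * π * nn i / T) * t) * Real.sin ((2 * π * nn j / T) * t)
               * Real.sin ((2 * π * nn k / T) * t))) with hF
  -- pointwise expansion of the integrand
  have hexp : ∀ t : ℝ,
      (2 / a i) * Real.sin ((2 * π * nn i / T) * t) *
          Qmap (θs + θtil + fun k => a k * Real.sin ((2 * π * nn k / T) * t))
      = (2 / a i * Qs) * Real.sin ((2 * π * nn i / T) * t) + ∑ j, ∑ k, F j k t := by
    intro t
    rw [hQmap]
    have harg : (θs + θtil + (fun k => a k * Real.sin ((2 * π * nn k / T) * t))) - θs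
        = fun k => θtil k + a k * Real.sin ((2 * π * nn k / T) * t) := by
      funext k; simp [Pi.add_apply, Pi.sub_apply]; ring
    rw [harg]
    simp only [hF, dotProduct, Matrix.mulVec, Finset.mul_sum, Finset.sum_mul,
      mul_add, add_mul]
    congr 1
    · ring
    exact Finset.sum_congr rfl fun j _ => Finset.sum_congr rfl fun k _ => by ring
  rw [intervalIntegral.integral_congr (fun t _ => hexp t)]
  -- integrability facts
  have csin : ∀ c : ℝ, Continuous fun t : ℝ => Real.sin (c * t) := fun c =>
    Real.continuous_sin.comp (continuous_const.mul continuous_id)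
  have hcontF : ∀ j k, Continuous (F j k) := by
    intro j k
    rw [hF]
    exact continuous_const.mul ((((continuous_const.mul (csin _)).add
      (continuous_const.mul ((csin _).mul (csin _)))).add
      (continuous_const.mul ((csin _).mul (csin _)))).add
      (continuous_const.mul (((csin _).mul (csin _)).mul (csin _))))
  have hiF : ∀ j k, IntervalIntegrable (F j k) MeasureTheory.volume 0 T :=
    fun j k => (hcontF j k).intervalIntegrable _ _
  have hcS : Continuous (fun t => ∑ j, ∑ k, F j k t) :=
    continuous_finset_sum _ fun j _ => continuous_finset_sum _ fun k _ => hcontF j k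
  have hiS : IntervalIntegrable (fun t => ∑ j, ∑ k, F j k t) MeasureTheory.volume 0 T :=
    hcS.intervalIntegrable _ _
  rw [intervalIntegral.integral_add (((ii_sin T _).const_mul _)) hiS]
  rw [intervalIntegral.integral_const_mul, J1 (nn i), mul_zero, zero_add]
  rw [intervalIntegral.integral_finset_sum (fun j _ =>
        (continuous_finset_sum _ fun k _ => hcontF j k).intervalIntegrable
          (μ := MeasureTheory.volume) 0 T)]
  rw [Finset.sum_congr rfl (fun j _ => intervalIntegral.integral_finset_sum (fun k _ =>
        (hcontF j k).intervalIntegrable (μ := MeasureTheory.volume) 0 T))]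
  have hintF : ∀ j k, (∫ t in (0:ℝ)..T, F j k t)
      = (1 / a i * H j k) * ((θtil j * a k) * (if i = k then T / 2 else 0)
          + (a j * θtil k) * (if i = j then T / 2 else 0)) := by
    intro j k
    rw [hF]
    simp only
    rw [intervalIntegral.integral_const_mul]
    have ii1 : IntervalIntegrable (fun t => (θtil j * θtil k) *
        Real.sin ((2 * π * nn i / T) * t)) MeasureTheory.volume 0 T :=
      (continuous_const.mul (csin _)).intervalIntegrable _ _
    have ii2 : IntervalIntegrable (fun t => (θtil j * a k) *
        (Real.sin ((2 * π * nn i / T) * t) * Real.sin ((2 * π * nn k / T) * t)))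
        MeasureTheory.volume 0 T :=
      (continuous_const.mul ((csin _).mul (csin _))).intervalIntegrable _ _
    have ii3 : IntervalIntegrable (fun t => (a j * θtil k) *
        (Real.sin ((2 * π * nn i / T) * t) * Real.sin ((2 * π * nn j / T) * t)))
        MeasureTheory.volume 0 T :=
      (continuous_const.mul ((csin _).mul (csin _))).intervalIntegrable _ _
    have ii4 : IntervalIntegrable (fun t => (a j * a k) *
        (Real.sin ((2 * π * nn i / T) * t) * Real.sin ((2 * π * nn j / T) * t)
          * Real.sin ((2 * π * nn k / T) * t))) MeasureTheory.volume 0 T :=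
      (continuous_const.mul (((csin _).mul (csin _)).mul (csin _))).intervalIntegrable _ _
    rw [intervalIntegral.integral_add ((ii1.add ii2).add ii3) ii4]
    rw [intervalIntegral.integral_add (ii1.add ii2) ii3]
    rw [intervalIntegral.integral_add ii1 ii2]
    rw [intervalIntegral.integral_const_mul, intervalIntegral.integral_const_mul,
      intervalIntegral.integral_const_mul, intervalIntegral.integral_const_mul,
      J1 (nn i), J2 i k, J2 i j, J3 (nn i) (nn j) (nn k)]
    ring
  have hsum : (∑ j, ∑ k, ∫ t in (0:ℝ)..T, F j k t)
      = ∑ j, ∑ k, (1 / a i * H j k) * ((θtil j * a k) * (if i = k then T / 2 else 0)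
          + (a j * θtil k) * (if i = j then T / 2 else 0)) :=
    Finset.sum_congr rfl fun j _ => Finset.sum_congr rfl fun k _ => hintF j k
  rw [hsum]
  -- collapse the Kronecker deltas
  simp only [mul_ite, ite_mul, mul_zero, zero_mul, mul_add, Finset.sum_add_distrib,
    Finset.sum_ite_eq, Finset.sum_ite_eq', Finset.mem_univ, if_true, Finset.sum_ite_irrel,
    Finset.sum_const_zero, add_zero, zero_add]
  have hsym : ∀ x, H x i = H i x := fun x => congrFun (congrFun hH i) x
  simp only [hsym, Matrix.mulVec, dotProduct]
  rw [Finset.mul_sum, Finset.mul_sum, ← Finset.sum_add_distrib]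
  refine Finset.sum_congr rfl fun x _ => ?_
  have hTne : T ≠ 0 := ne_of_gt hT
  have hai := ha i
  field_simp
  ring
end

section
/- Let ω > 0, K ∈ ℝ^{n×n}, and let P₁, Q ∈ ℝ^{n×n} be symmetric with Kᵀ P₁ + P₁ K = Q. Let q, p₂ > 0 satisfy q‖v‖² ≤ vᵀ Q v and vᵀ P₁ v ≤ p₂‖v‖² for all v ∈ ℝⁿ. Let σ ∈ (0,1) and α ≥ 2‖P₁K‖/q. Suppose θ̃ : ℝ → ℝⁿ is differentiable with θ̃'(t) = −(1/ω) K (θ̃(t) + e(t)) and the triggering condition ‖e(t)‖ ≤ (σ/α)‖θ̃(t)‖ holds for all t. Then V(t) := θ̃(t)ᵀ P₁ θ̃(t) satisfies V'(t) ≤ −(q/ω)(1 − σ)‖θ̃(t)‖² ≤ −(q(1 − σ)/(ω p₂))·V(t) for all t. -/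
open scoped RealInnerProductSpace

set_option maxHeartbeats 1000000

/-- Under the static triggering condition `‖e‖ ≤ (σ/α)‖θ̃‖` with
`σ ∈ (0,1)`, `α ≥ 2‖P₁K‖/q`, and the Lyapunov data `Kᵀ P₁ + P₁ K = Q`,
`q‖v‖² ≤ vᵀQv`, `vᵀP₁v ≤ p₂‖v‖²`, the Lyapunov function `V = θ̃ᵀP₁θ̃` satisfies
`V' ≤ −(q/ω)(1−σ)‖θ̃‖² ≤ −(q(1−σ)/(ω p₂))·V`. -/
theorem lyapunov_decay_event_triggered {n : ℕ}
    (ω : ℝ) (hω : 0 < ω)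
    (K P₁ Q : Matrix (Fin n) (Fin n) ℝ)
    (hP₁ : P₁.IsSymm) (hQ : Q.IsSymm)
    (hLyap : K.transpose * P₁ + P₁ * K = Q)
    (q p₂ : ℝ) (hq : 0 < q) (hp₂ : 0 < p₂)
    (hQlow : ∀ v : EuclideanSpace ℝ (Fin n), q * ‖v‖ ^ 2 ≤ ⟪v, Matrix.toEuclideanLin Q v⟫)
    (hP₁up : ∀ v : EuclideanSpace ℝ (Fin n), ⟪v, Matrix.toEuclideanLin P₁ v⟫ ≤ p₂ * ‖v‖ ^ 2)
    (σ α : ℝ) (hσ : σ ∈ Set.Ioo (0:ℝ) 1)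
    (hα : 2 * ‖Matrix.toEuclideanCLM (𝕜 := ℝ) (P₁ * K)‖ / q ≤ α)
    (e θtil : ℝ → EuclideanSpace ℝ (Fin n))
    (hθ : ∀ t : ℝ, HasDerivAt θtil
      (-(1 / ω) • Matrix.toEuclideanLin K (θtil t + e t)) t)
    (htrig : ∀ t : ℝ, ‖e t‖ ≤ (σ / α) * ‖θtil t‖) :
    ∀ t : ℝ,
      deriv (fun s => ⟪θtil s, Matrix.toEuclideanLin P₁ (θtil s)⟫) t ≤
          -(q / ω) * (1 - σ) * ‖θtil t‖ ^ 2 ∧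
      -(q / ω) * (1 - σ) * ‖θtil t‖ ^ 2 ≤
          -(q * (1 - σ) / (ω * p₂)) * ⟪θtil t, Matrix.toEuclideanLin P₁ (θtil t)⟫ := by
  intro t
  obtain ⟨hσ0, hσ1⟩ := hσ
  set θ := θtil t with hθt
  set ε := e t with hε
  set d : EuclideanSpace ℝ (Fin n) := -(1 / ω) • Matrix.toEuclideanLin K (θ + ε) with hd
  -- multiplicativity
  have hmul : ∀ (M N : Matrix (Fin n) (Fin n) ℝ) (x : EuclideanSpace ℝ (Fin n)),
      Matrix.toEuclideanLin (M * N) x = Matrix.toEuclideanLin M (Matrix.toEuclideanLin N x) := by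
    intro M N x
    have h := map_mul (Matrix.toEuclideanCLM (n := Fin n) (𝕜 := ℝ)) M N
    have := congrArg (fun T => T x) h
    simpa [← Matrix.coe_toEuclideanCLM_eq_toEuclideanLin] using this
  -- adjoint
  have hadj : ∀ (M : Matrix (Fin n) (Fin n) ℝ) (x y : EuclideanSpace ℝ (Fin n)),
      ⟪Matrix.toEuclideanLin M.transpose x, y⟫ = ⟪x, Matrix.toEuclideanLin M y⟫ := by
    intro M x y
    rw [EuclideanSpace.inner_eq_star_dotProduct, EuclideanSpace.inner_eq_star_dotProduct]
    simp [Matrix.dotProduct_mulVec, Matrix.mulVec_transpose]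
    rw [dotProduct_comm, ← Matrix.dotProduct_mulVec, dotProduct_comm]
  have hPsym : ∀ (x y : EuclideanSpace ℝ (Fin n)),
      ⟪Matrix.toEuclideanLin P₁ x, y⟫ = ⟪x, Matrix.toEuclideanLin P₁ y⟫ := by
    intro x y
    have := hadj P₁ x y
    rwa [hP₁.eq] at this
  -- derivative of V
  have hg : HasDerivAt (fun s => Matrix.toEuclideanLin P₁ (θtil s))
      (Matrix.toEuclideanLin P₁ d) t :=
    ((Matrix.toEuclideanLin P₁).toContinuousLinearMap).hasFDerivAt.comp_hasDerivAt t (hθ t)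
  have hV : HasDerivAt (fun s => ⟪θtil s, Matrix.toEuclideanLin P₁ (θtil s)⟫)
      (⟪θ, Matrix.toEuclideanLin P₁ d⟫ + ⟪d, Matrix.toEuclideanLin P₁ θ⟫) t :=
    HasDerivAt.inner ℝ (hθ t) hg
  have hderiv : deriv (fun s => ⟪θtil s, Matrix.toEuclideanLin P₁ (θtil s)⟫) t
      = ⟪θ, Matrix.toEuclideanLin P₁ d⟫ + ⟪d, Matrix.toEuclideanLin P₁ θ⟫ := hV.deriv
  -- algebraic identity
  have hid : ⟪θ, Matrix.toEuclideanLin P₁ d⟫ + ⟪d, Matrix.toEuclideanLin P₁ θ⟫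
      = -(1/ω) * (⟪θ, Matrix.toEuclideanLin Q θ⟫
          + 2 * ⟪θ, Matrix.toEuclideanLin (P₁ * K) ε⟫) := by
    have e1 : ∀ x, ⟪Matrix.toEuclideanLin K x, Matrix.toEuclideanLin P₁ θ⟫
        = ⟪θ, Matrix.toEuclideanLin (P₁ * K) x⟫ := by
      intro x
      rw [real_inner_comm, hPsym, ← hmul]
    have e2 : ∀ x, ⟪θ, Matrix.toEuclideanLin P₁ (Matrix.toEuclideanLin K x)⟫
        = ⟪θ, Matrix.toEuclideanLin (P₁ * K) x⟫ := by
      intro x; rw [hmul]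
    have eQ : ⟪θ, Matrix.toEuclideanLin Q θ⟫
        = 2 * ⟪θ, Matrix.toEuclideanLin (P₁ * K) θ⟫ := by
      rw [← hLyap]
      have h4 : Matrix.toEuclideanLin (K.transpose * P₁ + P₁ * K) θ
          = Matrix.toEuclideanLin (K.transpose * P₁) θ + Matrix.toEuclideanLin (P₁ * K) θ := by
        rw [map_add, LinearMap.add_apply]
      have h3 : ⟪θ, Matrix.toEuclideanLin (K.transpose * P₁) θ⟫
          = ⟪θ, Matrix.toEuclideanLin (P₁ * K) θ⟫ := by
        rw [hmul, real_inner_comm, hadj, hPsym, ← hmul]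
      rw [h4, inner_add_right, h3]; ring
    have hd1 : Matrix.toEuclideanLin P₁ d
        = -(1/ω) • Matrix.toEuclideanLin P₁ (Matrix.toEuclideanLin K (θ + ε)) := by
      rw [hd, map_smul]
    rw [hd1, hd, real_inner_smul_right, real_inner_smul_left]
    rw [e2 (θ + ε), e1 (θ + ε), map_add, inner_add_right, eQ]
    ring
  -- bound on cross term
  set nPK := ‖Matrix.toEuclideanCLM (𝕜 := ℝ) (P₁ * K)‖ with hnPK
  have hnPK0 : 0 ≤ nPK := norm_nonneg _
  have hPKnorm : ‖Matrix.toEuclideanLin (P₁ * K) ε‖ ≤ nPK * ‖ε‖ := by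
    have : Matrix.toEuclideanLin (P₁ * K) ε = Matrix.toEuclideanCLM (𝕜 := ℝ) (P₁ * K) ε := rfl
    rw [this]
    exact (Matrix.toEuclideanCLM (𝕜 := ℝ) (P₁ * K)).le_opNorm ε
  have hcs : |⟪θ, Matrix.toEuclideanLin (P₁ * K) ε⟫| ≤ nPK * ‖ε‖ * ‖θ‖ := by
    calc |⟪θ, Matrix.toEuclideanLin (P₁ * K) ε⟫|
        ≤ ‖θ‖ * ‖Matrix.toEuclideanLin (P₁ * K) ε‖ := abs_real_inner_le_norm _ _
      _ ≤ ‖θ‖ * (nPK * ‖ε‖) := by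
          exact mul_le_mul_of_nonneg_left hPKnorm (norm_nonneg θ)
      _ = nPK * ‖ε‖ * ‖θ‖ := by ring
  have hcross : 2 * (nPK * ‖ε‖) ≤ σ * q * ‖θ‖ := by
    rcases le_or_gt α 0 with hα0 | hα0
    · have h1 : nPK ≤ 0 := by
        have := hα
        rw [div_le_iff₀ hq] at this
        nlinarith
      have h2 : nPK = 0 := le_antisymm h1 hnPK0
      rw [h2]
      have h9 : 0 ≤ σ * q * ‖θ‖ := by positivity
      linarith
    · have h1 : 2 * nPK ≤ α * q := by
        have := hα
        rwa [div_le_iff₀ hq] at this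
      have h2 : ‖ε‖ ≤ σ / α * ‖θ‖ := htrig t
      have h3 : 0 < σ / α := div_pos hσ0 hα0
      have h4 : 2 * (nPK * ‖ε‖) ≤ 2 * nPK * (σ / α * ‖θ‖) := by
        nlinarith [norm_nonneg ε]
      have h5 : 2 * nPK * (σ / α * ‖θ‖) ≤ α * q * (σ / α * ‖θ‖) :=
        mul_le_mul_of_nonneg_right h1 (mul_nonneg h3.le (norm_nonneg θ))
      have h6 : α * q * (σ / α * ‖θ‖) = σ * q * ‖θ‖ := by
        field_simp
      linarith
  constructor
  · rw [hderiv, hid]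
    have hQb := hQlow θ
    have hc : ⟪θ, Matrix.toEuclideanLin (P₁ * K) ε⟫ ≥ -(nPK * ‖ε‖ * ‖θ‖) := by
      have := (abs_le.mp hcs).1
      linarith
    have hsum : q * (1 - σ) * ‖θ‖ ^ 2 ≤ ⟪θ, Matrix.toEuclideanLin Q θ⟫
        + 2 * ⟪θ, Matrix.toEuclideanLin (P₁ * K) ε⟫ := by
      have h7 : 2 * (nPK * ‖ε‖) * ‖θ‖ ≤ σ * q * ‖θ‖ * ‖θ‖ :=
        mul_le_mul_of_nonneg_right hcross (norm_nonneg θ)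
      nlinarith [norm_nonneg θ]
    have hω' : 0 < 1 / ω := by positivity
    have h8 := mul_le_mul_of_nonneg_left hsum hω'.le
    have heq : -(q / ω) * (1 - σ) * ‖θ‖ ^ 2 = -((1 / ω) * (q * (1 - σ) * ‖θ‖ ^ 2)) := by
      ring
    linarith
  · have hVb := hP₁up θ
    have hσ' : 0 < 1 - σ := by linarith
    have hc0 : 0 ≤ q * (1 - σ) / (ω * p₂) := by positivity
    have h1 : q * (1 - σ) / (ω * p₂) * ⟪θ, Matrix.toEuclideanLin P₁ θ⟫
        ≤ q * (1 - σ) / (ω * p₂) * (p₂ * ‖θ‖ ^ 2) := mul_le_mul_of_nonneg_left hVb hc0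
    have h2 : q * (1 - σ) / (ω * p₂) * (p₂ * ‖θ‖ ^ 2) = q / ω * (1 - σ) * ‖θ‖ ^ 2 := by
      field_simp
    nlinarith
end

section
/- Let ω > 0, K ∈ ℝ^{n×n}, and let P₁, Q ∈ ℝ^{n×n} be symmetric with Kᵀ P₁ + P₁ K = Q. Let p₁, p₂, q > 0 satisfy p₁‖v‖² ≤ vᵀ P₁ v ≤ p₂‖v‖² and q‖v‖² ≤ vᵀ Q v for all v ∈ ℝⁿ. Let σ ∈ (0,1), α ≥ 2‖P₁K‖/q, and suppose θ̃ : [0,∞) → ℝⁿ is differentiable with θ̃'(t) = −(1/ω) K (θ̃(t) + e(t)) and ‖e(t)‖ ≤ (σ/α)‖θ̃(t)‖ for all t ≥ 0. Then for all t ≥ 0: ‖θ̃(t)‖ ≤ √(p₂/p₁)·exp(−(1/(2ω))·(q/p₂)·(1 − σ)·t)·‖θ̃(0)‖. -/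
open scoped RealInnerProductSpace

private lemma aux_arith (ω q p₂ σ α a b r ee v : ℝ) (k : ℝ)
    (hω : 0 < ω) (hq : 0 < q) (hp₂ : 0 < p₂)
    (hσ0 : 0 < σ) (hσ1 : σ < 1) (hα : 2 * k / q ≤ α)
    (hk : 0 ≤ k) (hr : 0 ≤ r) (hee : 0 ≤ ee)
    (hA : q * r ^ 2 ≤ 2 * a) (habs : |b| ≤ r * (k * ee))
    (ht : ee ≤ σ / α * r) (hub : v ≤ p₂ * r ^ 2) :
    -(2 / ω) * (a + b) ≤ -(q * (1 - σ) / (ω * p₂)) * v := by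
  have hb : -(σ * q) * r ^ 2 ≤ 2 * b := by
    rcases eq_or_lt_of_le hk with h0 | h0
    · have hb0 : b = 0 := by
        have h1 : |b| ≤ 0 := by
          rw [← h0] at habs; simpa using habs
        exact abs_eq_zero.mp (le_antisymm h1 (abs_nonneg b))
      rw [hb0]
      nlinarith [mul_nonneg (mul_nonneg hσ0.le hq.le) (sq_nonneg r)]
    · have hαpos : 0 < α := lt_of_lt_of_le (by positivity) hα
      have hαq : 2 * k ≤ α * q := by
        rw [div_le_iff₀ hq] at hα; linarith
      have h13 : r * (k * ee) ≤ k * (σ / α) * r ^ 2 := by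
        nlinarith [mul_le_mul_of_nonneg_left ht (mul_nonneg hk hr)]
      have h2 : k * (σ / α) ≤ σ * q / 2 := by
        rw [← mul_div_assoc, div_le_iff₀ hαpos]
        nlinarith [mul_le_mul_of_nonneg_left hαq hσ0.le]
      nlinarith [neg_abs_le b, mul_le_mul_of_nonneg_right h2 (sq_nonneg r)]
  have hsum : q * (1 - σ) * r ^ 2 ≤ 2 * (a + b) := by nlinarith
  have hv : v / p₂ ≤ r ^ 2 := by rw [div_le_iff₀ hp₂]; linarith
  have hwpos : (0:ℝ) < 1 / ω := by positivity
  have hcoef : (0:ℝ) ≤ (1 / ω) * (q * (1 - σ)) := by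
    have : (0:ℝ) < 1 - σ := by linarith
    positivity
  have h1 := mul_le_mul_of_nonneg_left hsum hwpos.le
  have h2 := mul_le_mul_of_nonneg_left hv hcoef
  have heq : -(q * (1 - σ) / (ω * p₂)) * v = -((1 / ω) * (q * (1 - σ))) * (v / p₂) := by
    field_simp
  rw [heq]
  have e1 : 1 / ω * (2 * (a + b)) = (2 / ω) * (a + b) := by field_simp
  have e2 : 1 / ω * (q * (1 - σ) * r ^ 2) = 1 / ω * (q * (1 - σ)) * r ^ 2 := by ring
  rw [e1, e2] at h1
  linarith


/-- Exponential decay of the averaged estimation error under the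
static event-triggering condition: for all `t ≥ 0`,
`‖θ̃(t)‖ ≤ √(p₂/p₁)·exp(−(1/(2ω))·(q/p₂)·(1−σ)·t)·‖θ̃(0)‖`. -/
theorem estimation_error_exponential_decay {n : ℕ}
    (ω : ℝ) (hω : 0 < ω)
    (K P₁ Q : Matrix (Fin n) (Fin n) ℝ)
    (hP₁ : P₁.IsSymm) (hQ : Q.IsSymm)
    (hLyap : K.transpose * P₁ + P₁ * K = Q)
    (p₁ p₂ q : ℝ) (hp₁ : 0 < p₁) (hp₂ : 0 < p₂) (hq : 0 < q)
    (hP₁low : ∀ v : EuclideanSpace ℝ (Fin n), p₁ * ‖v‖ ^ 2 ≤ ⟪v, Matrix.toEuclideanLin P₁ v⟫)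
    (hP₁up : ∀ v : EuclideanSpace ℝ (Fin n), ⟪v, Matrix.toEuclideanLin P₁ v⟫ ≤ p₂ * ‖v‖ ^ 2)
    (hQlow : ∀ v : EuclideanSpace ℝ (Fin n), q * ‖v‖ ^ 2 ≤ ⟪v, Matrix.toEuclideanLin Q v⟫)
    (σ α : ℝ) (hσ : σ ∈ Set.Ioo (0:ℝ) 1)
    (hα : 2 * ‖Matrix.toEuclideanCLM (𝕜 := ℝ) (P₁ * K)‖ / q ≤ α)
    (e θtil : ℝ → EuclideanSpace ℝ (Fin n))
    (hθ : ∀ t : ℝ, 0 ≤ t → HasDerivAt θtil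
      (-(1 / ω) • Matrix.toEuclideanLin K (θtil t + e t)) t)
    (htrig : ∀ t : ℝ, 0 ≤ t → ‖e t‖ ≤ (σ / α) * ‖θtil t‖) :
    ∀ t : ℝ, 0 ≤ t →
      ‖θtil t‖ ≤ Real.sqrt (p₂ / p₁) *
        Real.exp (-(1 / (2 * ω)) * (q / p₂) * (1 - σ) * t) * ‖θtil 0‖ := by
  obtain ⟨hσ0, hσ1⟩ := hσ
  have hlin : ∀ (M : Matrix (Fin n) (Fin n) ℝ) (v : EuclideanSpace ℝ (Fin n)),
      Matrix.toEuclideanLin M v = Matrix.toEuclideanCLM (𝕜 := ℝ) M v := by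
    intro M v; rw [← Matrix.coe_toEuclideanCLM_eq_toEuclideanLin]; rfl
  set P : EuclideanSpace ℝ (Fin n) →L[ℝ] EuclideanSpace ℝ (Fin n) :=
    Matrix.toEuclideanCLM (𝕜 := ℝ) P₁ with hPdef
  set PK : EuclideanSpace ℝ (Fin n) →L[ℝ] EuclideanSpace ℝ (Fin n) :=
    Matrix.toEuclideanCLM (𝕜 := ℝ) (P₁ * K) with hPKdef
  -- P is symmetric
  have hPherm : P₁.IsHermitian := by
    rw [Matrix.IsHermitian, Matrix.conjTranspose_eq_transpose_of_trivial]; exact hP₁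
  have hPsym : ∀ v w : EuclideanSpace ℝ (Fin n), ⟪P v, w⟫ = ⟪v, P w⟫ := by
    intro v w
    have := (Matrix.isHermitian_iff_isSymmetric.mp hPherm) v w
    rwa [hlin, hlin] at this
  -- Lyapunov identity
  have hQsplit : ∀ v : EuclideanSpace ℝ (Fin n),
      ⟪v, Matrix.toEuclideanCLM (𝕜 := ℝ) Q v⟫ = 2 * ⟪v, PK v⟫ := by
    intro v
    have hst : K.transpose * P₁ = star (P₁ * K) := by
      rw [Matrix.star_eq_conjTranspose, Matrix.conjTranspose_mul,
        Matrix.conjTranspose_eq_transpose_of_trivial, Matrix.conjTranspose_eq_transpose_of_trivial,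
        hP₁.eq]
    have h1 : Matrix.toEuclideanCLM (𝕜 := ℝ) Q = star PK + PK := by
      rw [← hLyap, map_add, hst, map_star]
    rw [h1]
    simp only [ContinuousLinearMap.add_apply, inner_add_right]
    rw [ContinuousLinearMap.star_eq_adjoint, ContinuousLinearMap.adjoint_inner_right,
      real_inner_comm]
    ring
  -- the Lyapunov function and its derivative
  set V : ℝ → ℝ := fun t => ⟪θtil t, P (θtil t)⟫ with hVdef
  set c : ℝ := q * (1 - σ) / (ω * p₂) with hcdef
  have hc : 0 < c := by
    apply div_pos (mul_pos hq (by linarith)) (mul_pos hω hp₂)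
  have hVd : ∀ s : ℝ, 0 ≤ s → HasDerivAt V
      (-(2 / ω) * (⟪θtil s, PK (θtil s)⟫ + ⟪θtil s, PK (e s)⟫)) s := by
    intro s hs
    have hd := hθ s hs
    rw [hlin] at hd
    have hPd : HasDerivAt (fun t => P (θtil t))
        (P (-(1 / ω) • Matrix.toEuclideanCLM (𝕜 := ℝ) K (θtil s + e s))) s :=
      P.hasFDerivAt.comp_hasDerivAt s hd
    have h := hd.inner ℝ hPd
    convert h using 1
    case e'_4 => rfl
    case e'_5 => rfl
    have hPKapp : ∀ w, P (Matrix.toEuclideanCLM (𝕜 := ℝ) K w) = PK w := by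
      intro w
      rw [hPKdef, map_mul]
      rfl
    have hterm : ∀ w v : EuclideanSpace ℝ (Fin n), ⟪w, P v⟫ = ⟪v, P w⟫ := by
      intro w v; rw [← hPsym, real_inner_comm]
    rw [map_smul, real_inner_smul_right, hPKapp, real_inner_smul_left, hterm, hPKapp]
    rw [map_add, inner_add_right]
    field_simp
    ring
  -- derivative bound
  have hVub : ∀ s : ℝ, V s ≤ p₂ * ‖θtil s‖ ^ 2 := by
    intro s
    have := hP₁up (θtil s)
    rwa [hlin] at this
  have hVlb : ∀ s : ℝ, p₁ * ‖θtil s‖ ^ 2 ≤ V s := by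
    intro s
    have := hP₁low (θtil s)
    rwa [hlin] at this
  have hVnonneg : ∀ s : ℝ, 0 ≤ V s := by
    intro s
    have := hVlb s
    nlinarith [sq_nonneg ‖θtil s‖]
  have hDbound : ∀ s : ℝ, 0 ≤ s →
      -(2 / ω) * (⟪θtil s, PK (θtil s)⟫ + ⟪θtil s, PK (e s)⟫) ≤ -c * V s := by
    intro s hs
    have hA : q * ‖θtil s‖ ^ 2 ≤ 2 * ⟪θtil s, PK (θtil s)⟫ := by
      have := hQlow (θtil s)
      rwa [hlin, hQsplit] at this
    have habs : |⟪θtil s, PK (e s)⟫| ≤ ‖θtil s‖ * (‖PK‖ * ‖e s‖) := by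
      refine (abs_real_inner_le_norm _ _).trans ?_
      exact mul_le_mul_of_nonneg_left (PK.le_opNorm (e s)) (norm_nonneg _)
    have := aux_arith ω q p₂ σ α _ _ _ _ (V s) ‖PK‖ hω hq hp₂ hσ0 hσ1 hα
      (norm_nonneg _) (norm_nonneg _) (norm_nonneg _) hA habs (htrig s hs) (hVub s)
    rw [hcdef]
    exact this
  -- Gronwall via monotonicity of V t * exp (c t)
  set g : ℝ → ℝ := fun t => V t * Real.exp (c * t) with hgdef
  have hgd : ∀ s : ℝ, 0 ≤ s → HasDerivAt g
      (-(2 / ω) * (⟪θtil s, PK (θtil s)⟫ + ⟪θtil s, PK (e s)⟫) * Real.exp (c * s)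
        + V s * (Real.exp (c * s) * c)) s := by
    intro s hs
    have hexp : HasDerivAt (fun t : ℝ => Real.exp (c * t)) (Real.exp (c * s) * c) s := by
      simpa using ((hasDerivAt_id s).const_mul c).exp
    exact (hVd s hs).mul hexp
  have hgd_nonpos : ∀ s : ℝ, 0 ≤ s →
      -(2 / ω) * (⟪θtil s, PK (θtil s)⟫ + ⟪θtil s, PK (e s)⟫) * Real.exp (c * s)
        + V s * (Real.exp (c * s) * c) ≤ 0 := by
    intro s hs
    have h1 := hDbound s hs
    have h2 := Real.exp_pos (c * s)
    nlinarith
  have hanti : AntitoneOn g (Set.Ici (0:ℝ)) := by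
    apply antitoneOn_of_deriv_nonpos (convex_Ici 0)
    · intro s hs
      exact ((hgd s hs).continuousAt).continuousWithinAt
    · intro s hs
      rw [interior_Ici] at hs
      exact ((hgd s (le_of_lt hs)).differentiableAt).differentiableWithinAt
    · intro s hs
      rw [interior_Ici] at hs
      rw [(hgd s (le_of_lt hs)).deriv]
      exact hgd_nonpos s (le_of_lt hs)
  intro t ht
  have hVt : V t ≤ V 0 * Real.exp (-(c * t)) := by
    have h5 := hanti (Set.self_mem_Ici) (Set.mem_Ici.mpr ht) ht
    rw [hgdef] at h5
    simp only [mul_zero, Real.exp_zero, mul_one] at h5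
    rw [Real.exp_neg, ← div_eq_mul_inv, le_div_iff₀ (Real.exp_pos _)]
    exact h5
  -- conclude
  set E : ℝ := -(1 / (2 * ω)) * (q / p₂) * (1 - σ) * t with hEdef
  have hE2 : Real.exp E ^ 2 = Real.exp (-(c * t)) := by
    rw [← Real.exp_nat_mul]
    congr 1
    rw [hEdef, hcdef]
    field_simp
    ring
  have hsq : ‖θtil t‖ ^ 2 ≤ (Real.sqrt (p₂ / p₁) * Real.exp E * ‖θtil 0‖) ^ 2 := by
    have h1 : p₁ * ‖θtil t‖ ^ 2 ≤ p₂ * ‖θtil 0‖ ^ 2 * Real.exp (-(c * t)) := by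
      have h2 := hVlb t
      have h3 := hVub 0
      have h4 : V 0 * Real.exp (-(c * t)) ≤ p₂ * ‖θtil 0‖ ^ 2 * Real.exp (-(c * t)) := by
        have := Real.exp_pos (-(c * t))
        nlinarith
      linarith [hVt]
    have hs : Real.sqrt (p₂ / p₁) ^ 2 = p₂ / p₁ := Real.sq_sqrt (by positivity)
    rw [mul_pow, mul_pow, hs, hE2]
    rw [div_mul_eq_mul_div, div_mul_eq_mul_div, le_div_iff₀ hp₁]
    nlinarith
  have hRnn : 0 ≤ Real.sqrt (p₂ / p₁) * Real.exp E * ‖θtil 0‖ := by positivity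
  calc ‖θtil t‖ = Real.sqrt (‖θtil t‖ ^ 2) := (Real.sqrt_sq (norm_nonneg _)).symm
    _ ≤ Real.sqrt ((Real.sqrt (p₂ / p₁) * Real.exp E * ‖θtil 0‖) ^ 2) := Real.sqrt_le_sqrt hsq
    _ = Real.sqrt (p₂ / p₁) * Real.exp E * ‖θtil 0‖ := Real.sqrt_sq hRnn
end

section
/- Under the hypotheses: ω > 0, K ∈ ℝ^{n×n}, P₁, Q ∈ ℝ^{n×n} symmetric with Kᵀ P₁ + P₁ K = Q, constants p₁, p₂, q > 0 with p₁‖v‖² ≤ vᵀ P₁ v ≤ p₂‖v‖² and q‖v‖² ≤ vᵀ Q v for all v, σ ∈ (0,1), α ≥ 2‖P₁K‖/q, θ̃ : [0,∞) → ℝⁿ differentiable with θ̃'(t) = −(1/ω) K (θ̃(t) + e(t)) and ‖e(t)‖ ≤ (σ/α)‖θ̃(t)‖ for all t ≥ 0 — let additionally H ∈ ℝ^{n×n} be invertible and define the gradient estimate Ĝ(t) := H·θ̃(t). Then for all t ≥ 0: ‖Ĝ(t)‖ ≤ √(p₂/p₁)·‖H‖·‖H⁻¹‖·exp(−(1/(2ω))·(q/p₂)·(1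 − σ)·t)·‖Ĝ(0)‖. -/
open scoped RealInnerProductSpace

set_option maxHeartbeats 1000000

/-- Exponential decay of the averaged gradient estimate
`Ĝ = H θ̃` under the static event-triggering condition: for all `t ≥ 0`,
`‖Ĝ(t)‖ ≤ √(p₂/p₁)·‖H‖·‖H⁻¹‖·exp(−(1/(2ω))·(q/p₂)·(1−σ)·t)·‖Ĝ(0)‖`. -/
theorem gradient_estimate_exponential_decay {n : ℕ}
    (ω : ℝ) (hω : 0 < ω)
    (K P₁ Q : Matrix (Fin n) (Fin n) ℝ)
    (hP₁ : P₁.IsSymm) (hQ : Q.IsSymm)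
    (hLyap : K.transpose * P₁ + P₁ * K = Q)
    (p₁ p₂ q : ℝ) (hp₁ : 0 < p₁) (hp₂ : 0 < p₂) (hq : 0 < q)
    (hP₁low : ∀ v : EuclideanSpace ℝ (Fin n), p₁ * ‖v‖ ^ 2 ≤ ⟪v, Matrix.toEuclideanLin P₁ v⟫)
    (hP₁up : ∀ v : EuclideanSpace ℝ (Fin n), ⟪v, Matrix.toEuclideanLin P₁ v⟫ ≤ p₂ * ‖v‖ ^ 2)
    (hQlow : ∀ v : EuclideanSpace ℝ (Fin n), q * ‖v‖ ^ 2 ≤ ⟪v, Matrix.toEuclideanLin Q v⟫)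
    (σ α : ℝ) (hσ : σ ∈ Set.Ioo (0:ℝ) 1)
    (hα : 2 * ‖Matrix.toEuclideanCLM (𝕜 := ℝ) (P₁ * K)‖ / q ≤ α)
    (e θtil : ℝ → EuclideanSpace ℝ (Fin n))
    (hθ : ∀ t : ℝ, 0 ≤ t → HasDerivAt θtil
      (-(1 / ω) • Matrix.toEuclideanLin K (θtil t + e t)) t)
    (htrig : ∀ t : ℝ, 0 ≤ t → ‖e t‖ ≤ (σ / α) * ‖θtil t‖)
    (H : Matrix (Fin n) (Fin n) ℝ) (hH : IsUnit H.det)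
    (Ghat : ℝ → EuclideanSpace ℝ (Fin n))
    (hGhat : ∀ t, Ghat t = Matrix.toEuclideanLin H (θtil t)) :
    ∀ t : ℝ, 0 ≤ t →
      ‖Ghat t‖ ≤ Real.sqrt (p₂ / p₁) *
        ‖Matrix.toEuclideanCLM (𝕜 := ℝ) H‖ * ‖Matrix.toEuclideanCLM (𝕜 := ℝ) H⁻¹‖ *
        Real.exp (-(1 / (2 * ω)) * (q / p₂) * (1 - σ) * t) * ‖Ghat 0‖ := by
  obtain ⟨hσ0, hσ1⟩ := hσ
  have hclm : ∀ (A : Matrix (Fin n) (Fin n) ℝ) (x : EuclideanSpace ℝ (Fin n)),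
      Matrix.toEuclideanCLM (𝕜 := ℝ) A x = Matrix.toEuclideanLin A x := by
    intro A x; rw [← Matrix.coe_toEuclideanCLM_eq_toEuclideanLin]; rfl
  set PC := Matrix.toEuclideanCLM (𝕜 := ℝ) P₁ with hPC
  set QC := Matrix.toEuclideanCLM (𝕜 := ℝ) Q with hQC
  set MC := Matrix.toEuclideanCLM (𝕜 := ℝ) (P₁ * K) with hMC
  set AC := Matrix.toEuclideanCLM (𝕜 := ℝ) K with hAC
  -- symmetry of P₁
  have hPsym : ∀ x y : EuclideanSpace ℝ (Fin n), ⟪PC x, y⟫ = ⟪x, PC y⟫ := by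
    have : (Matrix.toEuclideanLin P₁).IsSymmetric := by
      rw [← Matrix.isHermitian_iff_isSymmetric, Matrix.IsHermitian,
        Matrix.conjTranspose_eq_transpose_of_trivial]; exact hP₁
    intro x y; rw [hclm, hclm]; exact this x y
  -- multiplicativity on applications
  have hmul : ∀ (A B : Matrix (Fin n) (Fin n) ℝ) (x : EuclideanSpace ℝ (Fin n)),
      Matrix.toEuclideanCLM (𝕜 := ℝ) (A * B) x
        = Matrix.toEuclideanCLM (𝕜 := ℝ) A (Matrix.toEuclideanCLM (𝕜 := ℝ) B x) := by
    intro A B x; rw [map_mul, ContinuousLinearMap.mul_apply]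
  -- Lyapunov identity: ⟪v, QC v⟫ = 2 ⟪v, MC v⟫
  have hQM : ∀ v : EuclideanSpace ℝ (Fin n), ⟪v, QC v⟫ = 2 * ⟪v, MC v⟫ := by
    intro v
    have h1 : ⟪v, Matrix.toEuclideanCLM (𝕜 := ℝ) (K.transpose * P₁) v⟫ = ⟪v, MC v⟫ := by
      have hKT : ∀ x, Matrix.toEuclideanCLM (𝕜 := ℝ) K.transpose x
          = LinearMap.adjoint (Matrix.toEuclideanLin K) x := by
        intro x
        rw [hclm, ← Matrix.toEuclideanLin_conjTranspose_eq_adjoint,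
          Matrix.conjTranspose_eq_transpose_of_trivial]
      rw [hmul, hKT, LinearMap.adjoint_inner_right]
      have : Matrix.toEuclideanLin K v = AC v := (hclm K v).symm
      rw [this, ← hPsym, real_inner_comm]
      congr 1
      rw [hMC, hmul]
    have h2 : ⟪v, QC v⟫ = ⟪v, Matrix.toEuclideanCLM (𝕜 := ℝ) (K.transpose * P₁) v⟫
        + ⟪v, MC v⟫ := by
      rw [hQC, ← hLyap, map_add, ContinuousLinearMap.add_apply, inner_add_right]
    rw [h2, h1]; ring
  -- the Lyapunov function
  set V : ℝ → ℝ := fun t => ⟪θtil t, PC (θtil t)⟫ with hV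
  set lam : ℝ := 1 / ω * (q / p₂) * (1 - σ) with hlam
  have hlam_nonneg : 0 ≤ lam := by
    apply mul_nonneg (mul_nonneg _ _) (by linarith)
    · positivity
    · positivity
  have hVlow : ∀ t, p₁ * ‖θtil t‖ ^ 2 ≤ V t := by
    intro t; rw [hV]; simpa [hPC, hclm] using hP₁low (θtil t)
  have hVup : ∀ t, V t ≤ p₂ * ‖θtil t‖ ^ 2 := by
    intro t; rw [hV]; simpa [hPC, hclm] using hP₁up (θtil t)
  -- derivative of V
  have hVderiv : ∀ t : ℝ, 0 ≤ t → HasDerivAt V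
      (-(1 / ω) * (⟪θtil t, QC (θtil t)⟫ + 2 * ⟪θtil t, MC (e t)⟫)) t := by
    intro t ht
    have hθt := hθ t ht
    set v' : EuclideanSpace ℝ (Fin n) :=
      -(1 / ω) • Matrix.toEuclideanLin K (θtil t + e t) with hv'
    have hPθ : HasDerivAt (fun s => PC (θtil s)) (PC v') t :=
      PC.hasFDerivAt.comp_hasDerivAt t hθt
    have hD := hθt.inner ℝ hPθ
    refine hD.congr_deriv ?_
    have hv'2 : v' = -(1 / ω) • (AC (θtil t) + AC (e t)) := by
      rw [hv', hAC, hclm, hclm, map_add]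
    have key : ⟪θtil t, PC v'⟫ = -(1 / ω) * (⟪θtil t, MC (θtil t)⟫ + ⟪θtil t, MC (e t)⟫) := by
      have hPA : ∀ x, PC (AC x) = MC x := by
        intro x; rw [hMC, hmul]
      rw [hv'2, map_smul, inner_smul_right, map_add, inner_add_right, hPA, hPA]
    have key2 : ⟪v', PC (θtil t)⟫ = ⟪θtil t, PC v'⟫ := by
      rw [← hPsym, real_inner_comm]
    rw [key2, key, hQM]; ring
  -- derivative bound: V' ≤ -lam * V
  have hcross : ∀ t : ℝ, 0 ≤ t → 2 * (‖MC‖ * (‖θtil t‖ * ‖e t‖)) ≤ σ * q * ‖θtil t‖ ^ 2 := by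
    intro t ht
    have he := htrig t ht
    have hM0 : (0:ℝ) ≤ ‖MC‖ := norm_nonneg _
    have hθ0 : (0:ℝ) ≤ ‖θtil t‖ := norm_nonneg _
    have h1 : 2 * (‖MC‖ * (‖θtil t‖ * ‖e t‖)) ≤ 2 * ‖MC‖ * (σ / α) * ‖θtil t‖ ^ 2 := by
      have := mul_le_mul_of_nonneg_left he (mul_nonneg hM0 hθ0)
      nlinarith
    have h2 : 2 * ‖MC‖ * (σ / α) ≤ σ * q := by
      rcases eq_or_lt_of_le (le_trans (by positivity) hα : (0:ℝ) ≤ α) with h0 | hαpos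
      · rw [← h0, div_zero, mul_zero]; positivity
      · rw [div_le_iff₀ hq] at hα
        rw [mul_comm σ q, ← mul_div_assoc, div_le_iff₀ hαpos]
        calc 2 * ‖MC‖ * σ ≤ α * q * σ := by nlinarith
          _ = q * σ * α := by ring
    nlinarith [sq_nonneg ‖θtil t‖]
  have hVbound : ∀ t : ℝ, 0 ≤ t →
      -(1 / ω) * (⟪θtil t, QC (θtil t)⟫ + 2 * ⟪θtil t, MC (e t)⟫) ≤ -lam * V t := by
    intro t ht
    have hQ1 : q * ‖θtil t‖ ^ 2 ≤ ⟪θtil t, QC (θtil t)⟫ := by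
      rw [hQC, hclm]; exact hQlow (θtil t)
    have hM1 : -(‖MC‖ * (‖θtil t‖ * ‖e t‖)) ≤ ⟪θtil t, MC (e t)⟫ := by
      have h := abs_real_inner_le_norm (θtil t) (MC (e t))
      have h2 : ‖MC (e t)‖ ≤ ‖MC‖ * ‖e t‖ := MC.le_opNorm _
      have := neg_abs_le (⟪θtil t, MC (e t)⟫)
      nlinarith [norm_nonneg (θtil t)]
    have hS : (1 - σ) * q * ‖θtil t‖ ^ 2
        ≤ ⟪θtil t, QC (θtil t)⟫ + 2 * ⟪θtil t, MC (e t)⟫ := by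
      have := hcross t ht; nlinarith
    have hS2 : (1 - σ) * q * (V t / p₂) ≤ (1 - σ) * q * ‖θtil t‖ ^ 2 := by
      apply mul_le_mul_of_nonneg_left _ (by nlinarith)
      rw [div_le_iff₀ hp₂]; linarith [hVup t]
    have hω' : (0:ℝ) < 1 / ω := by positivity
    have : lam * V t ≤ (1 / ω) * (⟪θtil t, QC (θtil t)⟫ + 2 * ⟪θtil t, MC (e t)⟫) := by
      have : lam * V t = (1 / ω) * ((1 - σ) * q * (V t / p₂)) := by
        rw [hlam]; ring
      rw [this]
      exact mul_le_mul_of_nonneg_left (le_trans hS2 hS) (le_of_lt hω')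
    linarith
  -- decay of V
  have hVdecay : ∀ t : ℝ, 0 ≤ t → V t ≤ V 0 * Real.exp (-lam * t) := by
    intro T hT
    set W : ℝ → ℝ := fun t => V t * Real.exp (lam * t) with hW
    have hWderiv : ∀ t : ℝ, 0 ≤ t → HasDerivAt W
        ((-(1 / ω) * (⟪θtil t, QC (θtil t)⟫ + 2 * ⟪θtil t, MC (e t)⟫)
          + lam * V t) * Real.exp (lam * t)) t := by
      intro t ht
      have h1 := (hVderiv t ht).mul (((hasDerivAt_id t).const_mul lam).exp)
      have heq : -(1 / ω) * (⟪θtil t, QC (θtil t)⟫ + 2 * ⟪θtil t, MC (e t)⟫)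
            * Real.exp (lam * t) + V t * (Real.exp (lam * t) * (lam * 1))
          = (-(1 / ω) * (⟪θtil t, QC (θtil t)⟫ + 2 * ⟪θtil t, MC (e t)⟫)
            + lam * V t) * Real.exp (lam * t) := by ring
      rw [← heq]
      exact h1
    have hanti : AntitoneOn W (Set.Icc 0 T) := by
      apply antitoneOn_of_deriv_nonpos (convex_Icc 0 T)
      · intro x hx
        exact ((hWderiv x hx.1).continuousAt).continuousWithinAt
      · intro x hx
        rw [interior_Icc] at hx
        exact ((hWderiv x (le_of_lt hx.1)).differentiableAt).differentiableWithinAt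
      · intro x hx
        rw [interior_Icc] at hx
        rw [(hWderiv x (le_of_lt hx.1)).deriv]
        have := hVbound x (le_of_lt hx.1)
        have hE : (0:ℝ) < Real.exp (lam * x) := Real.exp_pos _
        nlinarith
    have hWT : W T ≤ W 0 := hanti (Set.left_mem_Icc.2 hT) (Set.right_mem_Icc.2 hT) hT
    have hE : (0:ℝ) < Real.exp (lam * T) := Real.exp_pos _
    rw [hW] at hWT; simp only [mul_zero, Real.exp_zero, mul_one] at hWT
    rw [neg_mul, Real.exp_neg, ← div_eq_mul_inv, le_div_iff₀ hE]
    exact hWT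
  -- norm decay of θtil
  have hθdecay : ∀ t : ℝ, 0 ≤ t → ‖θtil t‖ ≤ Real.sqrt (p₂ / p₁) *
      Real.exp (-(lam / 2) * t) * ‖θtil 0‖ := by
    intro t ht
    have h1 : p₁ * ‖θtil t‖ ^ 2 ≤ p₂ * ‖θtil 0‖ ^ 2 * Real.exp (-lam * t) := by
      calc p₁ * ‖θtil t‖ ^ 2 ≤ V t := hVlow t
        _ ≤ V 0 * Real.exp (-lam * t) := hVdecay t ht
        _ ≤ p₂ * ‖θtil 0‖ ^ 2 * Real.exp (-lam * t) :=
            mul_le_mul_of_nonneg_right (hVup 0) (Real.exp_nonneg _)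
    have h2 : ‖θtil t‖ ^ 2 ≤ (p₂ / p₁) * Real.exp (-lam * t) * ‖θtil 0‖ ^ 2 := by
      rw [div_mul_eq_mul_div, div_mul_eq_mul_div, le_div_iff₀ hp₁]; nlinarith
    have h3 : ‖θtil t‖ = Real.sqrt (‖θtil t‖ ^ 2) := by
      rw [Real.sqrt_sq (norm_nonneg _)]
    rw [h3]
    have h4 : Real.sqrt ((p₂ / p₁) * Real.exp (-lam * t) * ‖θtil 0‖ ^ 2)
        = Real.sqrt (p₂ / p₁) * Real.exp (-(lam / 2) * t) * ‖θtil 0‖ := by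
      rw [Real.sqrt_mul (by positivity), Real.sqrt_mul (by positivity),
        Real.sqrt_sq (norm_nonneg _)]
      congr 1
      have hx : Real.exp (-lam * t) = Real.exp (-(lam / 2) * t) ^ 2 := by
        rw [sq, ← Real.exp_add]; ring_nf
      rw [hx, Real.sqrt_sq (Real.exp_nonneg _)]
    rw [← h4]
    exact Real.sqrt_le_sqrt h2
  -- assemble
  intro t ht
  set HC := Matrix.toEuclideanCLM (𝕜 := ℝ) H with hHC
  set HiC := Matrix.toEuclideanCLM (𝕜 := ℝ) H⁻¹ with hHiC
  have hG1 : ‖Ghat t‖ ≤ ‖HC‖ * ‖θtil t‖ := by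
    rw [hGhat t, ← hclm]; exact HC.le_opNorm _
  have hθ0G : θtil 0 = HiC (Ghat 0) := by
    rw [hGhat 0, ← hclm H]
    show θtil 0 = Matrix.toEuclideanCLM (𝕜 := ℝ) H⁻¹ (Matrix.toEuclideanCLM (𝕜 := ℝ) H (θtil 0))
    rw [← hmul, Matrix.nonsing_inv_mul H hH, map_one, ContinuousLinearMap.one_apply]
  have hG0 : ‖θtil 0‖ ≤ ‖HiC‖ * ‖Ghat 0‖ := by
    rw [hθ0G]; exact HiC.le_opNorm _
  have hexp : Real.exp (-(1 / (2 * ω)) * (q / p₂) * (1 - σ) * t)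
      = Real.exp (-(lam / 2) * t) := by
    congr 1; rw [hlam]; ring
  rw [hexp]
  calc ‖Ghat t‖ ≤ ‖HC‖ * ‖θtil t‖ := hG1
    _ ≤ ‖HC‖ * (Real.sqrt (p₂ / p₁) * Real.exp (-(lam / 2) * t) * ‖θtil 0‖) :=
        mul_le_mul_of_nonneg_left (hθdecay t ht) (norm_nonneg _)
    _ ≤ ‖HC‖ * (Real.sqrt (p₂ / p₁) * Real.exp (-(lam / 2) * t) * (‖HiC‖ * ‖Ghat 0‖)) := by
        apply mul_le_mul_of_nonneg_left _ (norm_nonneg _)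
        apply mul_le_mul_of_nonneg_left hG0 (by positivity)
    _ = Real.sqrt (p₂ / p₁) * ‖HC‖ * ‖HiC‖ * Real.exp (-(lam / 2) * t) * ‖Ghat 0‖ := by ring
end

section
/- Under the hypotheses: ω > 0, K ∈ ℝ^{n×n}, P₁, Q ∈ ℝ^{n×n} symmetric with Kᵀ P₁ + P₁ K = Q, constants p₁, p₂, q > 0 with p₁‖v‖² ≤ vᵀ P₁ v ≤ p₂‖v‖² and q‖v‖² ≤ vᵀ Q v for all v, σ ∈ (0,1), α ≥ 2‖P₁K‖/q, θ̃ : [0,∞) → ℝⁿ differentiable with θ̃'(t) = −(1/ω) K (θ̃(t) + e(t)) and ‖e(t)‖ ≤ (σ/α)‖θ̃(t)‖ for all t ≥ 0 — let additionally H ∈ ℝ^{n×n} be symmetric with constants h₁, h₂ > 0 such that h₁‖v‖² ≤ vᵀ H v ≤ h₂‖v‖² for all v, let Q* ∈ ℝ, and define the output y(t) := Q* + (1/2)·θ̃(t)ᵀ H θ̃(t). Then for all t ≥ 0: |y(t) − Q*| ≤ (h₂/h₁)·(p₂/p₁)·exp(−(1/ω)·(q/p₂)·(1 − σ)·t)·|y(0)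 − Q*|. -/
open scoped RealInnerProductSpace

set_option maxHeartbeats 1000000 in
/-- Exponential decay of the output error
`y(t) − Q* = (1/2) θ̃ᵀ H θ̃` under the static event-triggering condition: for all
`t ≥ 0`, `|y(t) − Q*| ≤ (h₂/h₁)(p₂/p₁)·exp(−(1/ω)(q/p₂)(1−σ)t)·|y(0) − Q*|`. -/
theorem output_exponential_decay {n : ℕ}
    (ω : ℝ) (hω : 0 < ω)
    (K P₁ Q : Matrix (Fin n) (Fin n) ℝ)
    (hP₁ : P₁.IsSymm) (hQ : Q.IsSymm)
    (hLyap : K.transpose * P₁ + P₁ * K = Q)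
    (p₁ p₂ q : ℝ) (hp₁ : 0 < p₁) (hp₂ : 0 < p₂) (hq : 0 < q)
    (hP₁low : ∀ v : EuclideanSpace ℝ (Fin n), p₁ * ‖v‖ ^ 2 ≤ ⟪v, Matrix.toEuclideanLin P₁ v⟫)
    (hP₁up : ∀ v : EuclideanSpace ℝ (Fin n), ⟪v, Matrix.toEuclideanLin P₁ v⟫ ≤ p₂ * ‖v‖ ^ 2)
    (hQlow : ∀ v : EuclideanSpace ℝ (Fin n), q * ‖v‖ ^ 2 ≤ ⟪v, Matrix.toEuclideanLin Q v⟫)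
    (σ α : ℝ) (hσ : σ ∈ Set.Ioo (0:ℝ) 1)
    (hα : 2 * ‖Matrix.toEuclideanCLM (𝕜 := ℝ) (P₁ * K)‖ / q ≤ α)
    (e θtil : ℝ → EuclideanSpace ℝ (Fin n))
    (hθ : ∀ t : ℝ, 0 ≤ t → HasDerivAt θtil
      (-(1 / ω) • Matrix.toEuclideanLin K (θtil t + e t)) t)
    (htrig : ∀ t : ℝ, 0 ≤ t → ‖e t‖ ≤ (σ / α) * ‖θtil t‖)
    (H : Matrix (Fin n) (Fin n) ℝ) (hH : H.IsSymm)
    (h₁ h₂ : ℝ) (hh₁ : 0 < h₁) (hh₂ : 0 < h₂)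
    (hHlow : ∀ v : EuclideanSpace ℝ (Fin n), h₁ * ‖v‖ ^ 2 ≤ ⟪v, Matrix.toEuclideanLin H v⟫)
    (hHup : ∀ v : EuclideanSpace ℝ (Fin n), ⟪v, Matrix.toEuclideanLin H v⟫ ≤ h₂ * ‖v‖ ^ 2)
    (Qstar : ℝ) (y : ℝ → ℝ)
    (hy : ∀ t, y t = Qstar + (1 / 2) * ⟪θtil t, Matrix.toEuclideanLin H (θtil t)⟫) :
    ∀ t : ℝ, 0 ≤ t →
      |y t - Qstar| ≤ (h₂ / h₁) * (p₂ / p₁) *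
        Real.exp (-(1 / ω) * (q / p₂) * (1 - σ) * t) * |y 0 - Qstar| := by
  obtain ⟨hσ0, hσ1⟩ := hσ
  have h1σ : (0:ℝ) < 1 - σ := by linarith
  set c : ℝ := (1 / ω) * (q / p₂) * (1 - σ) with hcdef
  have hc0 : 0 ≤ c := by positivity
  -- symmetry of P₁ as a linear map
  have symP : ∀ x v : EuclideanSpace ℝ (Fin n),
      ⟪x, Matrix.toEuclideanLin P₁ v⟫ = ⟪Matrix.toEuclideanLin P₁ x, v⟫ := by
    have h : P₁.IsHermitian := by
      rw [Matrix.IsHermitian, Matrix.conjTranspose_eq_transpose_of_trivial]; exact hP₁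
    exact fun x v => ((Matrix.isHermitian_iff_isSymmetric).mp h x v).symm
  have mulapp : ∀ (A B : Matrix (Fin n) (Fin n) ℝ) (x : EuclideanSpace ℝ (Fin n)),
      Matrix.toEuclideanLin (A * B) x
        = Matrix.toEuclideanLin A (Matrix.toEuclideanLin B x) := by
    intro A B x
    have : Matrix.toEuclideanCLM (𝕜 := ℝ) (A * B) x
        = Matrix.toEuclideanCLM (𝕜 := ℝ) A (Matrix.toEuclideanCLM (𝕜 := ℝ) B x) := by
      rw [map_mul]; rfl
    exact this
  have adjK : ∀ x v : EuclideanSpace ℝ (Fin n),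
      ⟪Matrix.toEuclideanLin K x, v⟫ = ⟪x, Matrix.toEuclideanLin K.transpose v⟫ := by
    intro x v
    rw [← Matrix.conjTranspose_eq_transpose_of_trivial,
      Matrix.toEuclideanLin_conjTranspose_eq_adjoint, LinearMap.adjoint_inner_right]
  set M : ℝ := ‖Matrix.toEuclideanCLM (𝕜 := ℝ) (P₁ * K)‖ with hMdef
  have hM0 : 0 ≤ M := norm_nonneg _
  have Mnorm : ∀ x : EuclideanSpace ℝ (Fin n),
      ‖Matrix.toEuclideanLin (P₁ * K) x‖ ≤ M * ‖x‖ := by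
    intro x
    have : Matrix.toEuclideanLin (P₁ * K) x = Matrix.toEuclideanCLM (𝕜 := ℝ) (P₁ * K) x := rfl
    rw [this]
    exact (Matrix.toEuclideanCLM (𝕜 := ℝ) (P₁ * K)).le_opNorm x
  have hMσq : 2 * M * (σ / α) ≤ σ * q := by
    have hα0 : 0 ≤ α := le_trans (by positivity) hα
    rcases eq_or_lt_of_le hα0 with hα0' | hαpos
    · have h' : 2 * M / q ≤ 0 := by rw [← hα0'] at hα; exact hα
      have hM : M ≤ 0 := by
        by_contra hc
        push_neg at hc
        have : 0 < 2 * M / q := by positivity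
        linarith
      have hMeq : M = 0 := le_antisymm hM hM0
      rw [hMeq]
      have : (0:ℝ) ≤ σ * q := by positivity
      nlinarith
    · have h2M : 2 * M ≤ α * q := by
        rw [div_le_iff₀ hq] at hα; linarith
      have hrw : 2 * M * (σ / α) = (2 * M * σ) / α := by ring
      rw [hrw, div_le_iff₀ hαpos]
      nlinarith [mul_le_mul_of_nonneg_right h2M hσ0.le]
  -- Lyapunov function
  set V : ℝ → ℝ := fun s => ⟪θtil s, Matrix.toEuclideanLin P₁ (θtil s)⟫ with hVdef
  set θd : ℝ → EuclideanSpace ℝ (Fin n) :=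
    fun s => -(1 / ω) • Matrix.toEuclideanLin K (θtil s + e s) with hθddef
  set d : ℝ → ℝ := fun s =>
    ⟪θtil s, Matrix.toEuclideanLin P₁ (θd s)⟫ + ⟪θd s, Matrix.toEuclideanLin P₁ (θtil s)⟫
    with hddef
  have hVd : ∀ s : ℝ, 0 ≤ s → HasDerivAt V (d s) s := by
    intro s hs
    have h1 := hθ s hs
    have h2 : HasDerivAt (fun u => Matrix.toEuclideanCLM (𝕜 := ℝ) P₁ (θtil u))
        (Matrix.toEuclideanCLM (𝕜 := ℝ) P₁ (θd s)) s :=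
      ((Matrix.toEuclideanCLM (𝕜 := ℝ) P₁).hasFDerivAt.comp_hasDerivAt s h1)
    exact h1.inner ℝ h2
  -- the key differential inequality
  have hkey : ∀ s : ℝ, 0 ≤ s → d s ≤ -c * V s := by
    intro s hs
    have e1 : ⟪Matrix.toEuclideanLin K (θtil s), Matrix.toEuclideanLin P₁ (θtil s)⟫
        = ⟪θtil s, Matrix.toEuclideanLin Q (θtil s)⟫ / 2 := by
      have a1 : ⟪Matrix.toEuclideanLin K (θtil s), Matrix.toEuclideanLin P₁ (θtil s)⟫
          = ⟪θtil s, Matrix.toEuclideanLin (K.transpose * P₁) (θtil s)⟫ := by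
        rw [adjK, mulapp]
      have a2 : ⟪Matrix.toEuclideanLin K (θtil s), Matrix.toEuclideanLin P₁ (θtil s)⟫
          = ⟪θtil s, Matrix.toEuclideanLin (P₁ * K) (θtil s)⟫ := by
        rw [symP, ← mulapp]
        exact real_inner_comm _ _
      have a3 : ⟪θtil s, Matrix.toEuclideanLin (K.transpose * P₁) (θtil s)⟫
          + ⟪θtil s, Matrix.toEuclideanLin (P₁ * K) (θtil s)⟫
          = ⟪θtil s, Matrix.toEuclideanLin Q (θtil s)⟫ := by
        rw [← inner_add_right]
        congr 1
        rw [← hLyap, map_add, LinearMap.add_apply]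
      linarith [a1, a2, a3]
    have e2 : ⟪Matrix.toEuclideanLin K (e s), Matrix.toEuclideanLin P₁ (θtil s)⟫
        = ⟪Matrix.toEuclideanLin (P₁ * K) (e s), θtil s⟫ := by
      rw [symP, ← mulapp]
    have hsym' : ⟪θtil s, Matrix.toEuclideanLin P₁ (θd s)⟫
        = ⟪θd s, Matrix.toEuclideanLin P₁ (θtil s)⟫ := by
      rw [symP]
      exact real_inner_comm _ _
    have hcross : ⟪θd s, Matrix.toEuclideanLin P₁ (θtil s)⟫
        = -(1 / ω) * (⟪θtil s, Matrix.toEuclideanLin Q (θtil s)⟫ / 2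
            + ⟪Matrix.toEuclideanLin (P₁ * K) (e s), θtil s⟫) := by
      simp only [hθddef, map_add, inner_smul_left, inner_add_left, conj_trivial]
      rw [e1, e2]
    have hd_eq : d s = -(1 / ω) * (⟪θtil s, Matrix.toEuclideanLin Q (θtil s)⟫
        + 2 * ⟪Matrix.toEuclideanLin (P₁ * K) (e s), θtil s⟫) := by
      simp only [hddef]
      rw [hsym', hcross]
      ring
    -- bound on the cross term
    have hx : |⟪Matrix.toEuclideanLin (P₁ * K) (e s), θtil s⟫| ≤ M * ‖e s‖ * ‖θtil s‖ := by
      calc |⟪Matrix.toEuclideanLin (P₁ * K) (e s), θtil s⟫|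
          ≤ ‖Matrix.toEuclideanLin (P₁ * K) (e s)‖ * ‖θtil s‖ := abs_real_inner_le_norm _ _
        _ ≤ M * ‖e s‖ * ‖θtil s‖ :=
            mul_le_mul_of_nonneg_right (Mnorm (e s)) (norm_nonneg _)
    have he : ‖e s‖ ≤ (σ / α) * ‖θtil s‖ := htrig s hs
    have hcb : -(σ * q) / 2 * ‖θtil s‖ ^ 2
        ≤ ⟪Matrix.toEuclideanLin (P₁ * K) (e s), θtil s⟫ := by
      have h1 : M * ‖e s‖ * ‖θtil s‖ ≤ M * ((σ / α) * ‖θtil s‖) * ‖θtil s‖ := by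
        apply mul_le_mul_of_nonneg_right _ (norm_nonneg _)
        exact mul_le_mul_of_nonneg_left he hM0
      have h2 : 2 * (M * ((σ / α) * ‖θtil s‖) * ‖θtil s‖) ≤ σ * q * ‖θtil s‖ ^ 2 := by
        have := mul_le_mul_of_nonneg_right hMσq
          (mul_nonneg (norm_nonneg (θtil s)) (norm_nonneg (θtil s)))
        nlinarith [this]
      have h3 := abs_le.mp hx
      nlinarith [h3.1, h1, h2]
    have hQb := hQlow (θtil s)
    have hVb : V s ≤ p₂ * ‖θtil s‖ ^ 2 := hP₁up (θtil s)
    -- combine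
    have hS : (1 - σ) * q * ‖θtil s‖ ^ 2 ≤ ⟪θtil s, Matrix.toEuclideanLin Q (θtil s)⟫
        + 2 * ⟪Matrix.toEuclideanLin (P₁ * K) (e s), θtil s⟫ := by nlinarith [hQb, hcb]
    have hcp : c * p₂ = (1 / ω) * q * (1 - σ) := by
      rw [hcdef]; field_simp
    have hm1 : (1 / ω) * ((1 - σ) * q * ‖θtil s‖ ^ 2)
        ≤ (1 / ω) * (⟪θtil s, Matrix.toEuclideanLin Q (θtil s)⟫
            + 2 * ⟪Matrix.toEuclideanLin (P₁ * K) (e s), θtil s⟫) :=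
      mul_le_mul_of_nonneg_left hS (by positivity)
    have hm2 : c * V s ≤ c * (p₂ * ‖θtil s‖ ^ 2) := mul_le_mul_of_nonneg_left hVb hc0
    have hcp3 : c * (p₂ * ‖θtil s‖ ^ 2) = (1 / ω) * ((1 - σ) * q * ‖θtil s‖ ^ 2) := by
      linear_combination ‖θtil s‖ ^ 2 * hcp
    rw [hd_eq]
    linarith [hm1, hm2, hcp3]
  -- Grönwall via antitonicity of g = V * exp(c ·)
  set g : ℝ → ℝ := fun s => V s * Real.exp (c * s) with hgdef
  have hgd : ∀ s : ℝ, 0 ≤ s →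
      HasDerivAt g (d s * Real.exp (c * s) + V s * (Real.exp (c * s) * (c * 1))) s := by
    intro s hs
    exact (hVd s hs).mul (((hasDerivAt_id s).const_mul c).exp)
  have hg_anti : AntitoneOn g (Set.Ici (0:ℝ)) := by
    apply antitoneOn_of_deriv_nonpos (convex_Ici 0)
    · exact fun s hs => ((hgd s hs).continuousAt).continuousWithinAt
    · rw [interior_Ici]
      exact fun s hs => ((hgd s (le_of_lt hs)).differentiableAt).differentiableWithinAt
    · rw [interior_Ici]
      intro s hs
      rw [(hgd s hs.le).deriv]
      have hk := hkey s hs.le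
      have hE := Real.exp_pos (c * s)
      nlinarith [mul_le_mul_of_nonneg_right (show d s + c * V s ≤ 0 by linarith) hE.le]
  intro t ht
  have hVt : V t * Real.exp (c * t) ≤ V 0 := by
    have h := hg_anti Set.self_mem_Ici ht ht
    simp only [hgdef, mul_zero, Real.exp_zero, mul_one] at h
    exact h
  -- assemble the final estimate
  have hyt : y t - Qstar = (1 / 2) * ⟪θtil t, Matrix.toEuclideanLin H (θtil t)⟫ := by
    rw [hy t]; ring
  have hy0 : y 0 - Qstar = (1 / 2) * ⟪θtil 0, Matrix.toEuclideanLin H (θtil 0)⟫ := by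
    rw [hy 0]; ring
  have a1 : 2 * (y t - Qstar) ≤ h₂ * ‖θtil t‖ ^ 2 := by
    have := hHup (θtil t); linarith [hyt]
  have a1' : h₁ * ‖θtil t‖ ^ 2 ≤ 2 * (y t - Qstar) := by
    have := hHlow (θtil t); linarith [hyt]
  have a5 : h₁ * ‖θtil 0‖ ^ 2 ≤ 2 * (y 0 - Qstar) := by
    have := hHlow (θtil 0); linarith [hy0]
  have a2 : p₁ * ‖θtil t‖ ^ 2 ≤ V t := hP₁low (θtil t)
  have a4 : V 0 ≤ p₂ * ‖θtil 0‖ ^ 2 := hP₁up (θtil 0)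
  have hΔt0 : 0 ≤ y t - Qstar := by nlinarith [a1', norm_nonneg (θtil t)]
  have hΔ00 : 0 ≤ y 0 - Qstar := by nlinarith [a5, norm_nonneg (θtil 0)]
  have hEct : (0:ℝ) < Real.exp (c * t) := Real.exp_pos _
  -- chain of multiplications
  have s1 : p₁ * (2 * (y t - Qstar)) ≤ h₂ * V t := by
    nlinarith [mul_le_mul_of_nonneg_left a1 hp₁.le, mul_le_mul_of_nonneg_left a2 hh₂.le]
  have t1 : (p₁ * (2 * (y t - Qstar))) * Real.exp (c * t) ≤ (h₂ * V t) * Real.exp (c * t) :=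
    mul_le_mul_of_nonneg_right s1 hEct.le
  have t2 : h₂ * (V t * Real.exp (c * t)) ≤ h₂ * V 0 := mul_le_mul_of_nonneg_left hVt hh₂.le
  have t3 : h₂ * V 0 ≤ h₂ * (p₂ * ‖θtil 0‖ ^ 2) := mul_le_mul_of_nonneg_left a4 hh₂.le
  have u1 : (p₁ * (2 * (y t - Qstar))) * Real.exp (c * t) ≤ h₂ * (p₂ * ‖θtil 0‖ ^ 2) := by
    nlinarith [t1, t2, t3]
  have u2 : h₁ * ((p₁ * (2 * (y t - Qstar))) * Real.exp (c * t))
      ≤ h₁ * (h₂ * (p₂ * ‖θtil 0‖ ^ 2)) := mul_le_mul_of_nonneg_left u1 hh₁.le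
  have t4 : (h₂ * p₂) * (h₁ * ‖θtil 0‖ ^ 2) ≤ (h₂ * p₂) * (2 * (y 0 - Qstar)) :=
    mul_le_mul_of_nonneg_left a5 (mul_nonneg hh₂.le hp₂.le)
  have key2 : (y t - Qstar) * (h₁ * p₁ * Real.exp (c * t)) ≤ h₂ * p₂ * (y 0 - Qstar) := by
    nlinarith [u2, t4]
  -- conclude
  rw [abs_of_nonneg hΔt0, abs_of_nonneg hΔ00]
  have hexp_eq : Real.exp (-(1 / ω) * (q / p₂) * (1 - σ) * t) = (Real.exp (c * t))⁻¹ := by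
    rw [← Real.exp_neg]
    congr 1
    rw [hcdef]; ring
  rw [hexp_eq]
  have hfinal : (h₂ / h₁) * (p₂ / p₁) * (Real.exp (c * t))⁻¹ * (y 0 - Qstar)
      = (h₂ * p₂ * (y 0 - Qstar)) / (h₁ * p₁ * Real.exp (c * t)) := by
    field_simp
  rw [hfinal, le_div_iff₀ (by positivity)]
  linarith [key2]
end

section
/- Under the hypotheses: ω > 0, K ∈ ℝ^{n×n}, P₁, Q ∈ ℝ^{n×n} symmetric with Kᵀ P₁ + P₁ K = Q, constants p₁, p₂, q > 0 with p₁‖v‖² ≤ vᵀ P₁ v ≤ p₂‖v‖² and q‖v‖² ≤ vᵀ Q v for all v, σ ∈ (0,1), α ≥ 2‖P₁K‖/q, θ̃ : [0,∞) → ℝⁿ differentiable with θ̃'(t) = −(1/ω) K (θ̃(t) + e(t)) and ‖e(t)‖ ≤ (σ/α)‖θ̃(t)‖ for all t ≥ 0 — let additionally a₁, …, a_n be reals, ω₁, …, ω_n reals, θ* ∈ ℝⁿ, and define the map input θ(t) := θ* + θ̃(t) + S(t) where S(t) ∈ ℝⁿ has components S_i(t) = a_i sin(ω_i t). Then for all t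 ≥ 0: ‖θ(t) − θ*‖ ≤ √(p₂/p₁)·exp(−(1/(2ω))·(q/p₂)·(1 − σ)·t)·‖θ̃(0)‖ + √(a₁² + ⋯ + a_n²). -/
open scoped RealInnerProductSpace

set_option maxHeartbeats 1000000

/-- Practical exponential convergence of the map input
`θ(t) = θ* + θ̃(t) + S(t)` (with sinusoidal dither `S_i(t) = a_i sin(ω_i t)`)
to the optimizer: for all `t ≥ 0`,
`‖θ(t) − θ*‖ ≤ √(p₂/p₁)·exp(−(1/(2ω))(q/p₂)(1−σ)t)·‖θ̃(0)‖ + √(a₁²+⋯+a_n²)`. -/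
theorem input_practical_convergence {n : ℕ}
    (ω : ℝ) (hω : 0 < ω)
    (K P₁ Q : Matrix (Fin n) (Fin n) ℝ)
    (hP₁ : P₁.IsSymm) (hQ : Q.IsSymm)
    (hLyap : K.transpose * P₁ + P₁ * K = Q)
    (p₁ p₂ q : ℝ) (hp₁ : 0 < p₁) (hp₂ : 0 < p₂) (hq : 0 < q)
    (hP₁low : ∀ v : EuclideanSpace ℝ (Fin n), p₁ * ‖v‖ ^ 2 ≤ ⟪v, Matrix.toEuclideanLin P₁ v⟫)
    (hP₁up : ∀ v : EuclideanSpace ℝ (Fin n), ⟪v, Matrix.toEuclideanLin P₁ v⟫ ≤ p₂ * ‖v‖ ^ 2)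
    (hQlow : ∀ v : EuclideanSpace ℝ (Fin n), q * ‖v‖ ^ 2 ≤ ⟪v, Matrix.toEuclideanLin Q v⟫)
    (σ α : ℝ) (hσ : σ ∈ Set.Ioo (0:ℝ) 1)
    (hα : 2 * ‖Matrix.toEuclideanCLM (𝕜 := ℝ) (P₁ * K)‖ / q ≤ α)
    (e θtil : ℝ → EuclideanSpace ℝ (Fin n))
    (hθ : ∀ t : ℝ, 0 ≤ t → HasDerivAt θtil
      (-(1 / ω) • Matrix.toEuclideanLin K (θtil t + e t)) t)
    (htrig : ∀ t : ℝ, 0 ≤ t → ‖e t‖ ≤ (σ / α) * ‖θtil t‖)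
    (a ws : Fin n → ℝ) (θstar : EuclideanSpace ℝ (Fin n))
    (S : ℝ → EuclideanSpace ℝ (Fin n))
    (hS : ∀ t i, S t i = a i * Real.sin (ws i * t))
    (θmap : ℝ → EuclideanSpace ℝ (Fin n))
    (hθmap : ∀ t, θmap t = θstar + θtil t + S t) :
    ∀ t : ℝ, 0 ≤ t →
      ‖θmap t - θstar‖ ≤ Real.sqrt (p₂ / p₁) *
          Real.exp (-(1 / (2 * ω)) * (q / p₂) * (1 - σ) * t) * ‖θtil 0‖ +
        Real.sqrt (∑ i, a i ^ 2) := by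
  obtain ⟨hσ0, hσ1⟩ := hσ
  set LP := Matrix.toEuclideanCLM (𝕜 := ℝ) P₁ with hLPdef
  set PK := Matrix.toEuclideanCLM (𝕜 := ℝ) (P₁ * K) with hPKdef
  have hLPcoe : ∀ v : EuclideanSpace ℝ (Fin n), LP v = Matrix.toEuclideanLin P₁ v := fun v => by
    rw [hLPdef, ← Matrix.coe_toEuclideanCLM_eq_toEuclideanLin]; rfl
  have hPKcoe : ∀ v : EuclideanSpace ℝ (Fin n),
      PK v = Matrix.toEuclideanLin (P₁ * K) v := fun v => by
    rw [hPKdef, ← Matrix.coe_toEuclideanCLM_eq_toEuclideanLin]; rfl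
  have hmul : ∀ v : EuclideanSpace ℝ (Fin n),
      Matrix.toEuclideanLin P₁ (Matrix.toEuclideanLin K v) = PK v := fun v => by
    rw [hPKcoe]; simp [Matrix.toEuclideanLin_apply, Matrix.mulVec_mulVec]
  -- symmetry of P₁
  have hsymmP : ∀ v w : EuclideanSpace ℝ (Fin n),
      ⟪Matrix.toEuclideanLin P₁ v, w⟫ = ⟪v, Matrix.toEuclideanLin P₁ w⟫ := by
    intro v w
    have h : P₁.conjTranspose = P₁ := by rw [Matrix.conjTranspose_eq_transpose_of_trivial]; exact hP₁
    have h2 : Matrix.toEuclideanLin P₁ = LinearMap.adjoint (Matrix.toEuclideanLin P₁) := by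
      conv_lhs => rw [← h, Matrix.toEuclideanLin_conjTranspose_eq_adjoint]
    conv_lhs => rw [h2]
    exact LinearMap.adjoint_inner_left _ _ _
  -- Q quadratic form = 2⟪v, PK v⟫
  have hQPK : ∀ v : EuclideanSpace ℝ (Fin n), q * ‖v‖ ^ 2 ≤ 2 * ⟪v, PK v⟫ := by
    intro v
    have hKT : Matrix.toEuclideanLin K.transpose
        = LinearMap.adjoint (Matrix.toEuclideanLin K) := by
      have h : K.conjTranspose = K.transpose := by
        rw [Matrix.conjTranspose]; ext i j; simp
      rw [← h, Matrix.toEuclideanLin_conjTranspose_eq_adjoint]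
    have hQv : Matrix.toEuclideanLin Q v
        = Matrix.toEuclideanLin (K.transpose * P₁) v + Matrix.toEuclideanLin (P₁ * K) v := by
      rw [← hLyap]; simp
    have h1 : ⟪v, Matrix.toEuclideanLin (K.transpose * P₁) v⟫ = ⟪v, PK v⟫ := by
      have e1 : Matrix.toEuclideanLin (K.transpose * P₁) v
          = Matrix.toEuclideanLin K.transpose (Matrix.toEuclideanLin P₁ v) := by
        simp [Matrix.toEuclideanLin_apply, Matrix.mulVec_mulVec]
      rw [e1, hKT, LinearMap.adjoint_inner_right, ← hsymmP, real_inner_comm, hmul]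
    have h2 := hQlow v
    rw [hQv, inner_add_right, h1, ← hPKcoe v] at h2
    linarith
  -- the derivative vector
  set D : ℝ → EuclideanSpace ℝ (Fin n) :=
    fun t => -(1 / ω) • Matrix.toEuclideanLin K (θtil t + e t) with hD
  set V : ℝ → ℝ := fun t => ⟪θtil t, LP (θtil t)⟫ with hV
  have hlow' : ∀ t, p₁ * ‖θtil t‖ ^ 2 ≤ V t := fun t => by
    rw [hV]; simp only [hLPcoe]; exact hP₁low _
  have hup' : ∀ t, V t ≤ p₂ * ‖θtil t‖ ^ 2 := fun t => by
    rw [hV]; simp only [hLPcoe]; exact hP₁up _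
  have hVnonneg : ∀ t, 0 ≤ V t := fun t =>
    le_trans (by positivity) (hlow' t)
  have hVderiv : ∀ t : ℝ, 0 ≤ t →
      HasDerivAt V (⟪θtil t, LP (D t)⟫ + ⟪D t, LP (θtil t)⟫) t := by
    intro t ht
    exact HasDerivAt.inner ℝ (hθ t ht) ((LP.hasFDerivAt).comp_hasDerivAt t (hθ t ht))
  set k : ℝ := (1 / ω) * (q / p₂) * (1 - σ) with hk
  have hk0 : 0 < k := by
    apply mul_pos (mul_pos (by positivity) (by positivity)); linarith
  -- key differential inequality
  have hVle : ∀ t : ℝ, 0 ≤ t →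
      ⟪θtil t, LP (D t)⟫ + ⟪D t, LP (θtil t)⟫ ≤ -k * V t := by
    intro t ht
    have hswap : ⟪D t, LP (θtil t)⟫ = ⟪θtil t, LP (D t)⟫ := by
      rw [hLPcoe, hLPcoe, ← hsymmP (D t) (θtil t)]
      exact real_inner_comm _ _
    have hLPD : LP (D t) = -(1 / ω) • (PK (θtil t) + PK (e t)) := by
      show LP (-(1 / ω) • Matrix.toEuclideanLin K (θtil t + e t)) = _
      rw [map_smul]
      congr 1
      rw [hLPcoe, map_add, map_add, hmul, hmul]
    have hinner : ⟪θtil t, LP (D t)⟫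
        = -(1 / ω) * (⟪θtil t, PK (θtil t)⟫ + ⟪θtil t, PK (e t)⟫) := by
      rw [hLPD, real_inner_smul_right, inner_add_right]
    have hA : q / 2 * ‖θtil t‖ ^ 2 ≤ ⟪θtil t, PK (θtil t)⟫ := by
      have := hQPK (θtil t); linarith
    -- bound on the cross term
    have hPKe : ‖PK‖ * ‖e t‖ ≤ σ * (q / 2) * ‖θtil t‖ := by
      rcases le_or_gt α 0 with hα0 | hα0
      · have h1 : 0 ≤ 2 * ‖PK‖ / q := by positivity
        have h2 : 2 * ‖PK‖ / q = 0 := le_antisymm (hα.trans hα0) h1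
        have h3 : 2 * ‖PK‖ = 0 := (div_eq_zero_iff.mp h2).resolve_right hq.ne'
        have h4 : ‖PK‖ = 0 := by linarith
        rw [h4, zero_mul]
        positivity
      · have he : ‖e t‖ ≤ σ / α * ‖θtil t‖ := htrig t ht
        have hPKb : ‖PK‖ ≤ α * q / 2 := by
          rw [div_le_iff₀ hq] at hα; linarith
        have h1 : ‖PK‖ * ‖e t‖ ≤ (α * q / 2) * (σ / α * ‖θtil t‖) :=
          mul_le_mul hPKb he (norm_nonneg _) (by positivity)
        calc ‖PK‖ * ‖e t‖ ≤ (α * q / 2) * (σ / α * ‖θtil t‖) := h1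
          _ = σ * (q / 2) * ‖θtil t‖ := by field_simp
    have hB : -(σ * (q / 2) * ‖θtil t‖ ^ 2) ≤ ⟪θtil t, PK (e t)⟫ := by
      have h1 : |⟪θtil t, PK (e t)⟫| ≤ ‖θtil t‖ * ‖PK (e t)‖ :=
        abs_real_inner_le_norm (θtil t) (PK (e t))
      have h2 : ‖PK (e t)‖ ≤ ‖PK‖ * ‖e t‖ := PK.le_opNorm (e t)
      have h3 : ‖θtil t‖ * ‖PK (e t)‖ ≤ ‖θtil t‖ * (σ * (q / 2) * ‖θtil t‖) :=
        mul_le_mul_of_nonneg_left (h2.trans hPKe) (norm_nonneg _)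
      have h4 := neg_abs_le ⟪θtil t, PK (e t)⟫
      have h5 : ‖θtil t‖ * (σ * (q / 2) * ‖θtil t‖) = σ * (q / 2) * ‖θtil t‖ ^ 2 := by ring
      linarith
    -- purely scalar arithmetic step
    have arith : ∀ A B Vt x : ℝ, q / 2 * x ≤ A → -(σ * (q / 2) * x) ≤ B →
        Vt ≤ p₂ * x → 0 ≤ x →
        -(1 / ω) * (A + B) + -(1 / ω) * (A + B)
          ≤ -((1 / ω) * (q / p₂) * (1 - σ)) * Vt := by
      intro A B Vt x hA' hB' hV' hx'
      have hd : q / p₂ * p₂ = q := div_mul_cancel₀ _ hp₂.ne'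
      have h1 : q * (1 - σ) * x ≤ 2 * (A + B) := by nlinarith
      have hc : (0:ℝ) ≤ q / p₂ * (1 - σ) :=
        mul_nonneg (div_nonneg hq.le hp₂.le) (by linarith)
      have h2 : (q / p₂) * (1 - σ) * Vt ≤ q * (1 - σ) * x := by
        have h5 := mul_le_mul_of_nonneg_left hV' hc
        have h6 : (q / p₂) * (1 - σ) * (p₂ * x) = q * (1 - σ) * x := by
          field_simp
        nlinarith [h5, h6]
      have h3 : (1 / ω) * ((q / p₂) * (1 - σ) * Vt) ≤ (1 / ω) * (2 * (A + B)) :=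
        mul_le_mul_of_nonneg_left (h2.trans h1) (by positivity)
      nlinarith [h3]
    rw [hswap, hinner, hk]
    exact arith _ _ _ _ hA hB (hup' t) (by positivity)
  -- Gronwall via monotonicity
  set g : ℝ → ℝ := fun t => V t * Real.exp (k * t) with hg
  have hgderiv : ∀ t : ℝ, 0 ≤ t → HasDerivAt g
      ((⟪θtil t, LP (D t)⟫ + ⟪D t, LP (θtil t)⟫) * Real.exp (k * t)
        + V t * (Real.exp (k * t) * k)) t := by
    intro t ht
    have h1 : HasDerivAt (fun s : ℝ => k * s) k t := by
      simpa using (hasDerivAt_id t).const_mul k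
    exact (hVderiv t ht).mul h1.exp
  have hanti : AntitoneOn g (Set.Ici (0:ℝ)) := by
    apply antitoneOn_of_deriv_nonpos (convex_Ici 0)
    · exact fun s hs => ((hgderiv s hs).continuousAt).continuousWithinAt
    · rw [interior_Ici]
      exact fun s hs => ((hgderiv s (le_of_lt hs)).differentiableAt).differentiableWithinAt
    · intro s hs
      rw [interior_Ici] at hs
      rw [(hgderiv s hs.le).deriv]
      have arith2 : ∀ W Vs Ex : ℝ, W ≤ -k * Vs → 0 < Ex → 0 ≤ Vs →
          W * Ex + Vs * (Ex * k) ≤ 0 := by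
        intro W Vs Ex hW hEx hVs
        nlinarith [mul_le_mul_of_nonneg_right hW hEx.le]
      exact arith2 _ _ _ (hVle s hs.le) (Real.exp_pos _) (hVnonneg s)
  -- final θtil bound
  have hθbound : ∀ t : ℝ, 0 ≤ t → ‖θtil t‖ ≤ Real.sqrt (p₂ / p₁) *
      Real.exp (-(1 / (2 * ω)) * (q / p₂) * (1 - σ) * t) * ‖θtil 0‖ := by
    intro t ht
    have hgle : g t ≤ g 0 := hanti (Set.self_mem_Ici) ht ht
    have hg0 : g 0 = V 0 := by simp [hg]
    have hVt : V t ≤ V 0 * Real.exp (-(k * t)) := by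
      have hE := Real.exp_pos (k * t)
      rw [Real.exp_neg, ← div_eq_mul_inv, le_div_iff₀ hE]
      rw [hg0] at hgle; exact hgle
    set R := Real.sqrt (p₂ / p₁) *
      Real.exp (-(1 / (2 * ω)) * (q / p₂) * (1 - σ) * t) * ‖θtil 0‖ with hRdef
    have hRnonneg : 0 ≤ R := by positivity
    have hR2 : R ^ 2 = (p₂ / p₁) * Real.exp (-(k * t)) * ‖θtil 0‖ ^ 2 := by
      rw [hRdef, mul_pow, mul_pow, Real.sq_sqrt (by positivity : (0:ℝ) ≤ p₂ / p₁)]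
      congr 2
      rw [sq, ← Real.exp_add, hk]
      congr 1
      field_simp
      ring
    have hchain : p₁ * ‖θtil t‖ ^ 2 ≤ p₂ * ‖θtil 0‖ ^ 2 * Real.exp (-(k * t)) := by
      have h1 := hlow' t
      have h2 := hup' 0
      have h3 : V 0 * Real.exp (-(k * t)) ≤ p₂ * ‖θtil 0‖ ^ 2 * Real.exp (-(k * t)) :=
        mul_le_mul_of_nonneg_right h2 (Real.exp_pos _).le
      linarith
    have hsq : ‖θtil t‖ ^ 2 ≤ R ^ 2 := by
      rw [hR2]
      have h9 : (p₂ / p₁) * Real.exp (-(k * t)) * ‖θtil 0‖ ^ 2 * p₁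
          = p₂ * ‖θtil 0‖ ^ 2 * Real.exp (-(k * t)) := by
        field_simp
      nlinarith [hchain, h9, hp₁]
    calc ‖θtil t‖ = Real.sqrt (‖θtil t‖ ^ 2) := (Real.sqrt_sq (norm_nonneg _)).symm
      _ ≤ Real.sqrt (R ^ 2) := Real.sqrt_le_sqrt hsq
      _ = R := Real.sqrt_sq hRnonneg
  -- dither bound
  have hSnorm : ∀ t : ℝ, ‖S t‖ ≤ Real.sqrt (∑ i, a i ^ 2) := by
    intro t
    rw [EuclideanSpace.norm_eq]
    apply Real.sqrt_le_sqrt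
    apply Finset.sum_le_sum
    intro i _
    rw [hS, Real.norm_eq_abs, sq_abs]
    have h1 := Real.sin_le_one (ws i * t)
    have h2 := Real.neg_one_le_sin (ws i * t)
    have h3 : Real.sin (ws i * t) ^ 2 ≤ 1 := by nlinarith
    nlinarith [mul_le_mul_of_nonneg_left h3 (sq_nonneg (a i))]
  -- conclusion
  intro t ht
  have h6 : θmap t - θstar = θtil t + S t := by rw [hθmap]; abel
  rw [h6]
  calc ‖θtil t + S t‖ ≤ ‖θtil t‖ + ‖S t‖ := norm_add_le _ _
    _ ≤ _ := add_le_add (hθbound t ht) (hSnorm t)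
end

section
/- Let ω > 0, K ∈ ℝ^{n×n}, and let θ̃, e : I → ℝⁿ be differentiable on an interval I with θ̃'(t) = −(1/ω) K (θ̃(t) + e(t)) and e'(t) = (1/ω) K (θ̃(t) + e(t)) for all t ∈ I, and suppose θ̃(t) ≠ 0 and e(t) ≠ 0 on I (Euclidean norms). Then the function φ(t) := ‖e(t)‖ / ‖θ̃(t)‖ is differentiable on I and satisfies φ'(t) ≤ (‖K‖/ω)·(1 + φ(t))² for all t ∈ I, where ‖K‖ is the operator norm of K. -/
/-- Derivative of the norm of a nonvanishing differentiable curve in a real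
inner product space: it exists and is bounded in absolute value by the norm of
the derivative. -/
lemma hasDerivAt_norm_of_ne {F : Type*} [NormedAddCommGroup F] [InnerProductSpace ℝ F]
    {f : ℝ → F} {f' : F} {x : ℝ} (hf : HasDerivAt f f' x) (h0 : f x ≠ 0) :
    ∃ d : ℝ, HasDerivAt (fun s => ‖f s‖) d x ∧ |d| ≤ ‖f'‖ := by
  have hdiff : DifferentiableAt ℝ (fun y => ‖f y‖) x :=
    hf.differentiableAt.norm ℝ h0
  set d := deriv (fun y => ‖f y‖) x with hd
  have hD : HasDerivAt (fun y => ‖f y‖) d x := hdiff.hasDerivAt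
  have h1 : HasDerivAt (fun y => ‖f y‖ ^ 2) (2 * ‖f x‖ ^ 1 * d) x := hD.pow 2
  have h2 : HasDerivAt (fun y => ‖f y‖ ^ 2) (2 * Inner.inner ℝ (f x) f') x := hf.norm_sq
  have huniq : 2 * ‖f x‖ ^ 1 * d = 2 * Inner.inner ℝ (f x) f' := h1.unique h2
  have hn : (0:ℝ) < ‖f x‖ := norm_pos_iff.mpr h0
  have hdval : d = Inner.inner ℝ (f x) f' / ‖f x‖ := by
    field_simp at huniq ⊢
    linarith
  refine ⟨d, hD, ?_⟩
  rw [hdval, abs_div, abs_of_pos hn, div_le_iff₀ hn]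
  calc |(Inner.inner ℝ (f x) f' : ℝ)| ≤ ‖f x‖ * ‖f'‖ := abs_real_inner_le_norm _ _
    _ = ‖f'‖ * ‖f x‖ := by ring

/-- Differential inequality for the trigger ratio
`φ = ‖e‖/‖θ̃‖` in the Zeno-exclusion argument: between events, with
`θ̃' = −(1/ω) K (θ̃ + e)` and `e' = (1/ω) K (θ̃ + e)` on an interval `I` on which
`θ̃` and `e` do not vanish, `φ` is differentiable with
`φ' ≤ (‖K‖/ω)·(1 + φ)²`, where `‖K‖` is the (Euclidean) operator norm of `K`. -/
theorem trigger_ratio_differential_inequality {n : ℕ}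
    (ω : ℝ) (hω : 0 < ω) (K : Matrix (Fin n) (Fin n) ℝ)
    (I : Set ℝ) (hI : I.OrdConnected)
    (θtil e : ℝ → EuclideanSpace ℝ (Fin n))
    (hθ : ∀ t ∈ I, HasDerivAt θtil
      (-(1 / ω) • Matrix.toEuclideanLin K (θtil t + e t)) t)
    (he : ∀ t ∈ I, HasDerivAt e
      ((1 / ω) • Matrix.toEuclideanLin K (θtil t + e t)) t)
    (hθ0 : ∀ t ∈ I, θtil t ≠ 0) (he0 : ∀ t ∈ I, e t ≠ 0) :
    ∀ t ∈ I, ∃ φ' : ℝ,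
      HasDerivAt (fun s => ‖e s‖ / ‖θtil s‖) φ' t ∧
      φ' ≤ (‖Matrix.toEuclideanCLM (𝕜 := ℝ) K‖ / ω) * (1 + ‖e t‖ / ‖θtil t‖) ^ 2 := by
  intro t ht
  set M : ℝ := ‖Matrix.toEuclideanCLM (𝕜 := ℝ) K‖ with hM
  have hM0 : 0 ≤ M := norm_nonneg _
  set v : EuclideanSpace ℝ (Fin n) :=
    (1 / ω) • Matrix.toEuclideanLin K (θtil t + e t) with hv
  have hθt : HasDerivAt θtil (-v) t := by
    have h := hθ t ht
    rw [neg_smul] at h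
    exact h
  have het : HasDerivAt e v t := he t ht
  set a : ℝ := ‖θtil t‖ with ha
  set b : ℝ := ‖e t‖ with hb
  have ha0 : (0:ℝ) < a := norm_pos_iff.mpr (hθ0 t ht)
  have hb0 : (0:ℝ) < b := norm_pos_iff.mpr (he0 t ht)
  -- bound on ‖v‖
  have hvnorm : ‖v‖ ≤ (M / ω) * (a + b) := by
    have hlin : Matrix.toEuclideanLin K (θtil t + e t)
        = Matrix.toEuclideanCLM (𝕜 := ℝ) K (θtil t + e t) := by
      rw [← Matrix.coe_toEuclideanCLM_eq_toEuclideanLin]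
      rfl
    have hop : ‖Matrix.toEuclideanCLM (𝕜 := ℝ) K (θtil t + e t)‖
        ≤ M * ‖θtil t + e t‖ := (Matrix.toEuclideanCLM (𝕜 := ℝ) K).le_opNorm _
    have htri : ‖θtil t + e t‖ ≤ a + b := norm_add_le _ _
    have : ‖v‖ = (1 / ω) * ‖Matrix.toEuclideanLin K (θtil t + e t)‖ := by
      rw [hv, norm_smul, Real.norm_eq_abs, abs_of_pos (by positivity : (0:ℝ) < 1 / ω)]
    rw [this, hlin]
    calc (1 / ω) * ‖Matrix.toEuclideanCLM (𝕜 := ℝ) K (θtil t + e t)‖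
        ≤ (1 / ω) * (M * (a + b)) := by
          have h1 : ‖Matrix.toEuclideanCLM (𝕜 := ℝ) K (θtil t + e t)‖ ≤ M * (a + b) :=
            hop.trans (by nlinarith)
          exact mul_le_mul_of_nonneg_left h1 (by positivity)
      _ = (M / ω) * (a + b) := by ring
  obtain ⟨Dθ, hDθ, hDθle⟩ := hasDerivAt_norm_of_ne hθt (hθ0 t ht)
  obtain ⟨De, hDe, hDele⟩ := hasDerivAt_norm_of_ne het (he0 t ht)
  have hanorm : ‖-v‖ = ‖v‖ := norm_neg _
  have hDθle' : |Dθ| ≤ ‖v‖ := by rwa [hanorm] at hDθle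
  refine ⟨(De * a - b * Dθ) / a ^ 2, ?_, ?_⟩
  · exact hDe.div hDθ (ne_of_gt ha0)
  · have key : De * a - b * Dθ ≤ ‖v‖ * (a + b) := by
      have h1 : De ≤ ‖v‖ := (le_abs_self _).trans hDele
      have h2 : -Dθ ≤ ‖v‖ := (neg_le_abs _).trans hDθle'
      nlinarith
    have hratio : (1 + b / a) = (a + b) / a := by field_simp
    have h3 : (De * a - b * Dθ) / a ^ 2 ≤ (M / ω) * (a + b) ^ 2 / a ^ 2 := by
      apply div_le_div_of_nonneg_right ?_ (by positivity) |>.trans_eq rfl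
      calc De * a - b * Dθ ≤ ‖v‖ * (a + b) := key
        _ ≤ (M / ω) * (a + b) * (a + b) := by nlinarith
        _ = (M / ω) * (a + b) ^ 2 := by ring
    calc (De * a - b * Dθ) / a ^ 2 ≤ (M / ω) * (a + b) ^ 2 / a ^ 2 := h3
      _ = (M / ω) * (1 + b / a) ^ 2 := by rw [hratio]; field_simp
end
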